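/- arXiv:2011.08322 — 3 statements merged into one kernel-verified Lean document; each statement's English description precedes it below -/
import Mathlib

section
/- Let a_1, a_2, a_3, a_{12}, b be real numbers. The series ∑_{i ∈ ℕ₊^3} i_1^{a_1} i_2^{a_2} i_3^{a_3} (i_1 + i_2)^{a_{12}} / (i_1 + i_2 + i_3)^b converges if and only if for every nonempty subset J ⊆ {1, 2, 3} one has b > |J| + ∑_{j ∈ J} a_j + a_{12}·[J ∩ {1,2} ≠ ∅], where [P] equals 1 if the condition P holds and 0 otherwise. -/
lemma summable_pnat_rpow {c : ℝ} : Summable (fun n : ℕ+ => ((n:ℕ):ℝ)^c) ↔ c < -1 := by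
  rw [← Equiv.summable_iff Equiv.pnatEquivNat.symm]
  have : ((fun n : ℕ+ => ((n:ℕ):ℝ)^c) ∘ Equiv.pnatEquivNat.symm)
      = fun n : ℕ => ((n:ℝ)+1)^c := by
    funext n
    simp [Equiv.pnatEquivNat, Nat.succPNat]
  rw [this]
  have := (summable_nat_add_iff (f := fun n : ℕ => ((n:ℕ):ℝ)^c) 1)
  simp only [Nat.cast_add, Nat.cast_one] at this
  rw [this, Real.summable_nat_rpow]

lemma rpow_pair {u v K : ℝ} (hu : 0 < u) (huv : u ≤ v) (hvK : v ≤ K * u) (c : ℝ) :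
    v ^ c ≤ K ^ |c| * u ^ c ∧ u ^ c ≤ K ^ |c| * v ^ c := by
  have hv : 0 < v := lt_of_lt_of_le hu huv
  have hK1 : 1 ≤ K := by nlinarith
  have hK0 : 0 < K := lt_of_lt_of_le one_pos hK1
  rcases le_or_gt 0 c with hc | hc
  · rw [abs_of_nonneg hc]
    have h1 : (1:ℝ) ≤ K^c := Real.one_le_rpow hK1 hc
    constructor
    · calc v^c ≤ (K*u)^c := Real.rpow_le_rpow hv.le hvK hc
        _ = K^c * u^c := Real.mul_rpow hK0.le hu.le
    · have h2 : u^c ≤ v^c := Real.rpow_le_rpow hu.le huv hc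
      nlinarith [Real.rpow_nonneg hv.le c]
  · rw [abs_of_neg hc]
    have h1 : (1:ℝ) ≤ K^(-c) := Real.one_le_rpow hK1 (by linarith)
    constructor
    · have h2 : v^c ≤ u^c := Real.rpow_le_rpow_of_nonpos hu huv hc.le
      nlinarith [Real.rpow_nonneg hu.le c]
    · have hdiv : v / K ≤ u := by rw [div_le_iff₀ hK0]; nlinarith
      have h2 : u^c ≤ (v/K)^c := Real.rpow_le_rpow_of_nonpos (by positivity) hdiv hc.le
      have h3 : (v/K)^c = K^(-c) * v^c := by
        rw [Real.div_rpow hv.le hK0.le, Real.rpow_neg hK0.le]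
        ring
      rw [h3] at h2; exact h2



lemma core_bound {c₁ c₂ c₃ : ℝ} (h3 : c₃ < -1) (h2 : c₂ + c₃ < -2) (h1 : c₁ + c₂ + c₃ < -3) :
    ∃ p₁ p₂ p₃ : ℝ, p₁ < -1 ∧ p₂ < -1 ∧ p₃ < -1 ∧
      ∀ x y z : ℝ, 1 ≤ x → x ≤ y → y ≤ z →
        x ^ c₁ * y ^ c₂ * z ^ c₃ ≤ x ^ p₁ * y ^ p₂ * z ^ p₃ := by
  set ε : ℝ := min (-1 - c₃) (min ((-2 - (c₂+c₃))/2) ((-3 - (c₁+c₂+c₃))/3)) with hε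
  have hε0 : 0 < ε := lt_min (by linarith) (lt_min (by linarith) (by linarith))
  have hε3 : c₃ ≤ -1 - ε := by
    have := min_le_left (-1 - c₃) (min ((-2 - (c₂+c₃))/2) ((-3 - (c₁+c₂+c₃))/3)); linarith
  have hε2 : c₂ + c₃ ≤ -2 - 2*ε := by
    have h := (min_le_right (-1 - c₃) (min ((-2 - (c₂+c₃))/2) ((-3 - (c₁+c₂+c₃))/3))).trans
      (min_le_left ((-2 - (c₂+c₃))/2) ((-3 - (c₁+c₂+c₃))/3))
    linarith
  have hε1 : c₁ + c₂ + c₃ ≤ -3 - 3*ε := by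
    have h := (min_le_right (-1 - c₃) (min ((-2 - (c₂+c₃))/2) ((-3 - (c₁+c₂+c₃))/3))).trans
      (min_le_right ((-2 - (c₂+c₃))/2) ((-3 - (c₁+c₂+c₃))/3))
    linarith
  set p₃ : ℝ := max c₃ (-1-ε) with hp₃
  set p₂ : ℝ := max (c₂+c₃-p₃) (-1-ε) with hp₂
  set p₁ : ℝ := max (c₁+c₂+c₃-p₂-p₃) (-1-ε) with hp₁
  have hp3u : p₃ ≤ -1-ε := max_le hε3 le_rfl
  have hp3l : c₃ ≤ p₃ := le_max_left _ _
  have hp3L : -1-ε ≤ p₃ := le_max_right _ _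
  have hp2u : p₂ ≤ -1-ε := max_le (by linarith) le_rfl
  have hp2l : c₂+c₃-p₃ ≤ p₂ := le_max_left _ _
  have hp2L : -1-ε ≤ p₂ := le_max_right _ _
  have hp1u : p₁ ≤ -1-ε := max_le (by linarith) le_rfl
  have hp1l : c₁+c₂+c₃-p₂-p₃ ≤ p₁ := le_max_left _ _
  refine ⟨p₁, p₂, p₃, by linarith, by linarith, by linarith, ?_⟩
  intro x y z hx hxy hyz
  have hx0 : (0:ℝ) < x := lt_of_lt_of_le one_pos hx
  have hy0 : (0:ℝ) < y := lt_of_lt_of_le hx0 hxy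
  have hz0 : (0:ℝ) < z := lt_of_lt_of_le hy0 hyz
  have L1 : (0:ℝ) ≤ Real.log x := Real.log_nonneg hx
  have L2 : Real.log x ≤ Real.log y := Real.log_le_log hx0 hxy
  have L3 : Real.log y ≤ Real.log z := Real.log_le_log hy0 hyz
  rw [Real.rpow_def_of_pos hx0, Real.rpow_def_of_pos hy0, Real.rpow_def_of_pos hz0,
    Real.rpow_def_of_pos hx0, Real.rpow_def_of_pos hy0, Real.rpow_def_of_pos hz0,
    ← Real.exp_add, ← Real.exp_add, ← Real.exp_add, ← Real.exp_add, Real.exp_le_exp]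
  nlinarith [mul_nonneg (by linarith : (0:ℝ) ≤ p₃ - c₃) (by linarith : (0:ℝ) ≤ Real.log z - Real.log y),
    mul_nonneg (by linarith : (0:ℝ) ≤ p₂ + p₃ - (c₂ + c₃)) (by linarith : (0:ℝ) ≤ Real.log y - Real.log x),
    mul_nonneg (by linarith : (0:ℝ) ≤ p₁ + p₂ + p₃ - (c₁ + c₂ + c₃)) L1]

lemma summable_triple {p q r : ℝ} (hp : p < -1) (hq : q < -1) (hr : r < -1) :
    Summable (fun t : ℕ+ × ℕ+ × ℕ+ => ((t.1:ℕ):ℝ)^p * ((t.2.1:ℕ):ℝ)^q * ((t.2.2:ℕ):ℝ)^r) := by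
  have h1 := (summable_pnat_rpow.2 hq).mul_of_nonneg (summable_pnat_rpow.2 hr)
    (fun n => by positivity) (fun n => by positivity)
  have h2 := (summable_pnat_rpow.2 hp).mul_of_nonneg h1
    (fun n => by positivity) (fun x => by positivity)
  exact h2.congr (fun t => by ring)

noncomputable def g3 (a₁ a₂ a₃ a₁₂ b : ℝ) : ℕ+ × ℕ+ × ℕ+ → ℝ := fun t =>
  ((t.1:ℕ):ℝ)^a₁ * ((t.2.1:ℕ):ℝ)^a₂ * ((t.2.2:ℕ):ℝ)^a₃ *
    (max ((t.1:ℕ):ℝ) ((t.2.1:ℕ):ℝ))^a₁₂ *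
    (max (max ((t.1:ℕ):ℝ) ((t.2.1:ℕ):ℝ)) ((t.2.2:ℕ):ℝ))^(-b)

lemma g3_nonneg (a₁ a₂ a₃ a₁₂ b : ℝ) (t : ℕ+ × ℕ+ × ℕ+) : 0 ≤ g3 a₁ a₂ a₃ a₁₂ b t := by
  unfold g3; positivity

lemma summable_F_iff_g3 (a₁ a₂ a₃ a₁₂ b : ℝ) :
    Summable (fun t : ℕ+ × ℕ+ × ℕ+ =>
      ((t.1:ℕ):ℝ)^a₁ * ((t.2.1:ℕ):ℝ)^a₂ * ((t.2.2:ℕ):ℝ)^a₃ *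
        (((t.1:ℕ):ℝ) + ((t.2.1:ℕ):ℝ))^a₁₂ /
        (((t.1:ℕ):ℝ) + ((t.2.1:ℕ):ℝ) + ((t.2.2:ℕ):ℝ))^b)
    ↔ Summable (g3 a₁ a₂ a₃ a₁₂ b) := by
  set F : ℕ+ × ℕ+ × ℕ+ → ℝ := fun t =>
      ((t.1:ℕ):ℝ)^a₁ * ((t.2.1:ℕ):ℝ)^a₂ * ((t.2.2:ℕ):ℝ)^a₃ *
        (((t.1:ℕ):ℝ) + ((t.2.1:ℕ):ℝ))^a₁₂ /
        (((t.1:ℕ):ℝ) + ((t.2.1:ℕ):ℝ) + ((t.2.2:ℕ):ℝ))^b with hF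
  set C : ℝ := 2^|a₁₂| * 3^|b| with hC
  have hCpos : 0 < C := by positivity
  have key : ∀ t : ℕ+ × ℕ+ × ℕ+, F t ≤ C * g3 a₁ a₂ a₃ a₁₂ b t ∧
      g3 a₁ a₂ a₃ a₁₂ b t ≤ C * F t := by
    rintro ⟨i, j, k⟩
    set x : ℝ := ((i:ℕ):ℝ) with hx
    set y : ℝ := ((j:ℕ):ℝ) with hy
    set z : ℝ := ((k:ℕ):ℝ) with hz
    have hx1 : (1:ℝ) ≤ x := by rw [hx]; have := i.property; exact_mod_cast this
    have hy1 : (1:ℝ) ≤ y := by rw [hy]; have := j.property; exact_mod_cast this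
    have hz1 : (1:ℝ) ≤ z := by rw [hz]; have := k.property; exact_mod_cast this
    have hx0 : (0:ℝ) < x := lt_of_lt_of_le one_pos hx1
    have hy0 : (0:ℝ) < y := lt_of_lt_of_le one_pos hy1
    have hz0 : (0:ℝ) < z := lt_of_lt_of_le one_pos hz1
    set m2 : ℝ := max x y with hm2
    set m3 : ℝ := max m2 z with hm3
    have hm20 : 0 < m2 := lt_of_lt_of_le hx0 (le_max_left _ _)
    have hm30 : 0 < m3 := lt_of_lt_of_le hm20 (le_max_left _ _)
    have h2a : m2 ≤ x + y := sup_le (by linarith) (by linarith)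
    have h2b : x + y ≤ 2 * m2 := by
      have := le_max_left x y; have := le_max_right x y; linarith
    have h3a : m3 ≤ x + y + z := sup_le (by linarith) (by linarith)
    have h3b : x + y + z ≤ 3 * m3 := by
      have q1 : m2 ≤ m3 := le_max_left _ _
      have q2 : z ≤ m3 := le_max_right _ _
      linarith
    obtain ⟨p1, p2⟩ := rpow_pair hm20 h2a h2b a₁₂
    obtain ⟨q1, q2⟩ := rpow_pair hm30 h3a h3b (-b)
    rw [abs_neg] at q1 q2
    have hFeq : F (i, j, k) = x^a₁ * y^a₂ * z^a₃ * (x+y)^a₁₂ * (x+y+z)^(-b) := by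
      rw [hF]
      simp only []
      rw [Real.rpow_neg (by linarith), div_eq_mul_inv]
    have hgeq : g3 a₁ a₂ a₃ a₁₂ b (i, j, k) = x^a₁ * y^a₂ * z^a₃ * m2^a₁₂ * m3^(-b) := rfl
    constructor
    · rw [hFeq, hgeq, hC]
      calc x^a₁ * y^a₂ * z^a₃ * (x+y)^a₁₂ * (x+y+z)^(-b)
          ≤ x^a₁ * y^a₂ * z^a₃ * (2^|a₁₂| * m2^a₁₂) * (3^|b| * m3^(-b)) := by
            gcongr x^a₁ * y^a₂ * z^a₃ * ?_ * ?_
        _ = 2^|a₁₂| * 3^|b| * (x^a₁ * y^a₂ * z^a₃ * m2^a₁₂ * m3^(-b)) := by ring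
    · rw [hFeq, hgeq, hC]
      calc x^a₁ * y^a₂ * z^a₃ * m2^a₁₂ * m3^(-b)
          ≤ x^a₁ * y^a₂ * z^a₃ * (2^|a₁₂| * (x+y)^a₁₂) * (3^|b| * (x+y+z)^(-b)) := by
            gcongr x^a₁ * y^a₂ * z^a₃ * ?_ * ?_
        _ = 2^|a₁₂| * 3^|b| * (x^a₁ * y^a₂ * z^a₃ * (x+y)^a₁₂ * (x+y+z)^(-b)) := by ring
  have hFnn : ∀ t, 0 ≤ F t := by
    intro t; rw [hF]; positivity
  constructor
  · intro h
    exact Summable.of_nonneg_of_le (fun t => g3_nonneg a₁ a₂ a₃ a₁₂ b t)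
      (fun t => (key t).2) (h.mul_left C)
  · intro h
    exact Summable.of_nonneg_of_le hFnn (fun t => (key t).1) (h.mul_left C)

lemma g3_summable (a₁ a₂ a₃ a₁₂ b : ℝ)
    (H1 : a₁ + a₁₂ - b < -1) (H2 : a₂ + a₁₂ - b < -1) (H3 : a₃ - b < -1)
    (H12 : a₁ + a₂ + a₁₂ - b < -2) (H13 : a₁ + a₃ + a₁₂ - b < -2)
    (H23 : a₂ + a₃ + a₁₂ - b < -2)
    (H123 : a₁ + a₂ + a₃ + a₁₂ - b < -3) : Summable (g3 a₁ a₂ a₃ a₁₂ b) := by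
  obtain ⟨p1, q1, r1, hp1, hq1, hr1, ineq1⟩ :=
    core_bound (c₁ := a₁) (c₂ := a₂ + a₁₂) (c₃ := a₃ + -b)
      (by linarith) (by linarith) (by linarith)
  obtain ⟨p2, q2, r2, hp2, hq2, hr2, ineq2⟩ :=
    core_bound (c₁ := a₂) (c₂ := a₁ + a₁₂) (c₃ := a₃ + -b)
      (by linarith) (by linarith) (by linarith)
  obtain ⟨p3, q3, r3, hp3, hq3, hr3, ineq3⟩ :=
    core_bound (c₁ := a₁) (c₂ := a₃) (c₃ := a₂ + a₁₂ + -b)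
      (by linarith) (by linarith) (by linarith)
  obtain ⟨p4, q4, r4, hp4, hq4, hr4, ineq4⟩ :=
    core_bound (c₁ := a₃) (c₂ := a₁) (c₃ := a₂ + a₁₂ + -b)
      (by linarith) (by linarith) (by linarith)
  obtain ⟨p5, q5, r5, hp5, hq5, hr5, ineq5⟩ :=
    core_bound (c₁ := a₂) (c₂ := a₃) (c₃ := a₁ + a₁₂ + -b)
      (by linarith) (by linarith) (by linarith)
  obtain ⟨p6, q6, r6, hp6, hq6, hr6, ineq6⟩ :=
    core_bound (c₁ := a₃) (c₂ := a₂) (c₃ := a₁ + a₁₂ + -b)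
      (by linarith) (by linarith) (by linarith)
  have hH : Summable (fun t : ℕ+ × ℕ+ × ℕ+ =>
      ((t.1:ℕ):ℝ)^p1 * ((t.2.1:ℕ):ℝ)^q1 * ((t.2.2:ℕ):ℝ)^r1 +
      ((t.1:ℕ):ℝ)^q2 * ((t.2.1:ℕ):ℝ)^p2 * ((t.2.2:ℕ):ℝ)^r2 +
      ((t.1:ℕ):ℝ)^p3 * ((t.2.1:ℕ):ℝ)^r3 * ((t.2.2:ℕ):ℝ)^q3 +
      ((t.1:ℕ):ℝ)^q4 * ((t.2.1:ℕ):ℝ)^r4 * ((t.2.2:ℕ):ℝ)^p4 +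
      ((t.1:ℕ):ℝ)^r5 * ((t.2.1:ℕ):ℝ)^p5 * ((t.2.2:ℕ):ℝ)^q5 +
      ((t.1:ℕ):ℝ)^r6 * ((t.2.1:ℕ):ℝ)^q6 * ((t.2.2:ℕ):ℝ)^p6) := by
    exact (((((summable_triple hp1 hq1 hr1).add (summable_triple hq2 hp2 hr2)).add
      (summable_triple hp3 hr3 hq3)).add (summable_triple hq4 hr4 hp4)).add
      (summable_triple hr5 hp5 hq5)).add (summable_triple hr6 hq6 hp6)
  apply Summable.of_nonneg_of_le (fun t => by unfold g3; positivity) _ hH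
  rintro ⟨i, j, k⟩
  set X : ℝ := ((i:ℕ):ℝ) with hX
  set Y : ℝ := ((j:ℕ):ℝ) with hY
  set Z : ℝ := ((k:ℕ):ℝ) with hZ
  have hX1 : (1:ℝ) ≤ X := by rw [hX]; have := i.property; exact_mod_cast this
  have hY1 : (1:ℝ) ≤ Y := by rw [hY]; have := j.property; exact_mod_cast this
  have hZ1 : (1:ℝ) ≤ Z := by rw [hZ]; have := k.property; exact_mod_cast this
  have hX0 : (0:ℝ) < X := lt_of_lt_of_le one_pos hX1
  have hY0 : (0:ℝ) < Y := lt_of_lt_of_le one_pos hY1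
  have hZ0 : (0:ℝ) < Z := lt_of_lt_of_le one_pos hZ1
  have n1 : (0:ℝ) ≤ X^p1 * Y^q1 * Z^r1 := by positivity
  have n2 : (0:ℝ) ≤ X^q2 * Y^p2 * Z^r2 := by positivity
  have n3 : (0:ℝ) ≤ X^p3 * Y^r3 * Z^q3 := by positivity
  have n4 : (0:ℝ) ≤ X^q4 * Y^r4 * Z^p4 := by positivity
  have n5 : (0:ℝ) ≤ X^r5 * Y^p5 * Z^q5 := by positivity
  have n6 : (0:ℝ) ≤ X^r6 * Y^q6 * Z^p6 := by positivity
  show X^a₁ * Y^a₂ * Z^a₃ * (max X Y)^a₁₂ * (max (max X Y) Z)^(-b) ≤ _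
  rcases le_total X Y with hxy | hyx
  · rcases le_total Y Z with hyz | hzy
    · -- σ1 : X ≤ Y ≤ Z
      rw [max_eq_right hxy, max_eq_right hyz]
      have e : X^a₁ * Y^a₂ * Z^a₃ * Y^a₁₂ * Z^(-b) = X^a₁ * Y^(a₂+a₁₂) * Z^(a₃ + -b) := by
        rw [Real.rpow_add hY0, Real.rpow_add hZ0]; ring
      rw [e]
      have := ineq1 X Y Z hX1 hxy hyz
      linarith
    · rw [max_eq_right hxy, max_eq_left hzy]
      rcases le_total X Z with hxz | hzx
      · -- σ3 : X ≤ Z ≤ Y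
        have e : X^a₁ * Y^a₂ * Z^a₃ * Y^a₁₂ * Y^(-b) = X^a₁ * Z^a₃ * Y^(a₂+a₁₂ + -b) := by
          rw [Real.rpow_add hY0, Real.rpow_add hY0]; ring
        rw [e]
        have := ineq3 X Z Y hX1 hxz hzy
        linarith
      · -- σ4 : Z ≤ X ≤ Y
        have e : X^a₁ * Y^a₂ * Z^a₃ * Y^a₁₂ * Y^(-b) = Z^a₃ * X^a₁ * Y^(a₂+a₁₂ + -b) := by
          rw [Real.rpow_add hY0, Real.rpow_add hY0]; ring
        rw [e]
        have := ineq4 Z X Y hZ1 hzx hxy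
        linarith
  · rcases le_total X Z with hxz | hzx
    · -- σ2 : Y ≤ X ≤ Z
      rw [max_eq_left hyx, max_eq_right hxz]
      have e : X^a₁ * Y^a₂ * Z^a₃ * X^a₁₂ * Z^(-b) = Y^a₂ * X^(a₁+a₁₂) * Z^(a₃ + -b) := by
        rw [Real.rpow_add hX0, Real.rpow_add hZ0]; ring
      rw [e]
      have := ineq2 Y X Z hY1 hyx hxz
      linarith
    · rw [max_eq_left hyx, max_eq_left hzx]
      rcases le_total Y Z with hyz | hzy
      · -- σ5 : Y ≤ Z ≤ X
        have e : X^a₁ * Y^a₂ * Z^a₃ * X^a₁₂ * X^(-b) = Y^a₂ * Z^a₃ * X^(a₁+a₁₂ + -b) := by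
          rw [Real.rpow_add hX0, Real.rpow_add hX0]; ring
        rw [e]
        have := ineq5 Y Z X hY1 hyz hzx
        linarith
      · -- σ6 : Z ≤ Y ≤ X
        have e : X^a₁ * Y^a₂ * Z^a₃ * X^a₁₂ * X^(-b) = Z^a₃ * Y^a₂ * X^(a₁+a₁₂ + -b) := by
          rw [Real.rpow_add hX0, Real.rpow_add hX0]; ring
        rw [e]
        have := ineq6 Z Y X hZ1 hzy hyx
        linarith

lemma exp_lt_single {e C : ℝ} {f : ℕ+ → ℝ} (hf : Summable f)
    (hb : ∀ n : ℕ+, ((n:ℕ):ℝ)^e ≤ C * f n) : e < -1 :=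
  summable_pnat_rpow.1 (Summable.of_nonneg_of_le (fun n => by positivity) hb (hf.mul_left C))

lemma exp_lt_sigma2 {e C : ℝ} {f : (Σ n : ℕ+, Fin (n:ℕ)) → ℝ} (hf : Summable f)
    (hb : ∀ s, ((s.1:ℕ):ℝ)^e ≤ C * f s) : e < -2 := by
  have h1 : Summable (fun s : Σ n : ℕ+, Fin (n:ℕ) => ((s.1:ℕ):ℝ)^e) :=
    Summable.of_nonneg_of_le (fun s => by positivity) hb (hf.mul_left C)
  rw [summable_sigma_of_nonneg (fun s => by positivity)] at h1
  have h2 := h1.2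
  have h3 : (fun n : ℕ+ => ∑' _k : Fin (n:ℕ), ((n:ℕ):ℝ)^e)
      = fun n : ℕ+ => ((n:ℕ):ℝ)^(1+e) := by
    funext n
    rw [tsum_const]
    simp only [Nat.card_eq_fintype_card, Fintype.card_fin, nsmul_eq_mul]
    rw [Real.rpow_add (by exact_mod_cast n.property : (0:ℝ) < ((n:ℕ):ℝ)), Real.rpow_one]
  rw [h3] at h2
  have := summable_pnat_rpow.1 h2
  linarith

lemma exp_lt_sigma3 {e C : ℝ} {f : (Σ n : ℕ+, Fin (n:ℕ) × Fin (n:ℕ)) → ℝ} (hf : Summable f)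
    (hb : ∀ s, ((s.1:ℕ):ℝ)^e ≤ C * f s) : e < -3 := by
  have h1 : Summable (fun s : Σ n : ℕ+, Fin (n:ℕ) × Fin (n:ℕ) => ((s.1:ℕ):ℝ)^e) :=
    Summable.of_nonneg_of_le (fun s => by positivity) hb (hf.mul_left C)
  rw [summable_sigma_of_nonneg (fun s => by positivity)] at h1
  have h2 := h1.2
  have h3 : (fun n : ℕ+ => ∑' _k : Fin (n:ℕ) × Fin (n:ℕ), ((n:ℕ):ℝ)^e)
      = fun n : ℕ+ => ((n:ℕ):ℝ)^(2+e) := by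
    funext n
    have hn0 : (0:ℝ) < ((n:ℕ):ℝ) := by exact_mod_cast n.property
    rw [tsum_const]
    simp only [Nat.card_eq_fintype_card, Fintype.card_prod, Fintype.card_fin, nsmul_eq_mul]
    rw [Real.rpow_add hn0, show (2:ℝ) = ((2:ℕ):ℝ) from by norm_num, Real.rpow_natCast]
    push_cast
    ring
  rw [h3] at h2
  have := summable_pnat_rpow.1 h2
  linarith

def padd (n : ℕ+) (k : ℕ) : ℕ+ := ⟨(n:ℕ) + k, by positivity⟩

lemma padd_coe (n : ℕ+) (k : ℕ) : ((padd n k : ℕ) : ℝ) = ((n:ℕ):ℝ) + (k:ℝ) := by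
  simp [padd]

section rev
variable {a₁ a₂ a₃ a₁₂ b : ℝ}

lemma rev1 (hs : Summable (g3 a₁ a₂ a₃ a₁₂ b)) : a₁ + a₁₂ - b < -1 := by
  have hι : Function.Injective (fun n : ℕ+ => ((n, 1, 1) : ℕ+ × ℕ+ × ℕ+)) := by
    intro a c h; simpa using h
  have h2 := hs.comp_injective hι
  have h : a₁ + (a₁₂ + -b) < -1 := by
    apply exp_lt_single h2 (C := 1)
    intro n
    have hX1 : (1:ℝ) ≤ ((n:ℕ):ℝ) := by exact_mod_cast n.property
    have hX0 : (0:ℝ) < ((n:ℕ):ℝ) := lt_of_lt_of_le one_pos hX1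
    have heq : (g3 a₁ a₂ a₃ a₁₂ b ∘ fun n : ℕ+ => ((n, 1, 1) : ℕ+ × ℕ+ × ℕ+)) n
        = ((n:ℕ):ℝ)^(a₁ + (a₁₂ + -b)) := by
      simp only [Function.comp_apply, g3, PNat.one_coe, Nat.cast_one, Real.one_rpow, mul_one]
      rw [max_eq_left hX1, max_eq_left hX1, Real.rpow_add hX0, Real.rpow_add hX0]
      ring
    rw [heq, one_mul]
  linarith

lemma rev2 (hs : Summable (g3 a₁ a₂ a₃ a₁₂ b)) : a₂ + a₁₂ - b < -1 := by
  have hι : Function.Injective (fun n : ℕ+ => ((1, n, 1) : ℕ+ × ℕ+ × ℕ+)) := by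
    intro a c h; simpa using h
  have h2 := hs.comp_injective hι
  have h : a₂ + (a₁₂ + -b) < -1 := by
    apply exp_lt_single h2 (C := 1)
    intro n
    have hX1 : (1:ℝ) ≤ ((n:ℕ):ℝ) := by exact_mod_cast n.property
    have hX0 : (0:ℝ) < ((n:ℕ):ℝ) := lt_of_lt_of_le one_pos hX1
    have heq : (g3 a₁ a₂ a₃ a₁₂ b ∘ fun n : ℕ+ => ((1, n, 1) : ℕ+ × ℕ+ × ℕ+)) n
        = ((n:ℕ):ℝ)^(a₂ + (a₁₂ + -b)) := by
      simp only [Function.comp_apply, g3, PNat.one_coe, Nat.cast_one, Real.one_rpow, one_mul]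
      rw [max_eq_right hX1, max_eq_left hX1, Real.rpow_add hX0, Real.rpow_add hX0]
      ring
    rw [heq, one_mul]
  linarith

lemma rev3 (hs : Summable (g3 a₁ a₂ a₃ a₁₂ b)) : a₃ - b < -1 := by
  have hι : Function.Injective (fun n : ℕ+ => ((1, 1, n) : ℕ+ × ℕ+ × ℕ+)) := by
    intro a c h; simpa using h
  have h2 := hs.comp_injective hι
  have h : a₃ + -b < -1 := by
    apply exp_lt_single h2 (C := 1)
    intro n
    have hX1 : (1:ℝ) ≤ ((n:ℕ):ℝ) := by exact_mod_cast n.property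
    have hX0 : (0:ℝ) < ((n:ℕ):ℝ) := lt_of_lt_of_le one_pos hX1
    have heq : (g3 a₁ a₂ a₃ a₁₂ b ∘ fun n : ℕ+ => ((1, 1, n) : ℕ+ × ℕ+ × ℕ+)) n
        = ((n:ℕ):ℝ)^(a₃ + -b) := by
      simp only [Function.comp_apply, g3, PNat.one_coe, Nat.cast_one, Real.one_rpow,
        one_mul, max_self]
      rw [max_eq_right hX1, Real.rpow_add hX0]
      ring
    rw [heq, one_mul]
  linarith

end rev

section rev2v
variable {a₁ a₂ a₃ a₁₂ b : ℝ}

lemma rev12 (hs : Summable (g3 a₁ a₂ a₃ a₁₂ b)) : a₁ + a₂ + a₁₂ - b < -2 := by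
  have hι : Function.Injective
      (fun s : Σ n : ℕ+, Fin (n:ℕ) => ((s.1, padd s.1 s.2, 1) : ℕ+ × ℕ+ × ℕ+)) := by
    rintro ⟨n, k⟩ ⟨m, l⟩ h
    have h1 : n = m := congrArg Prod.fst h
    subst h1
    have h2 : padd n k = padd n l := congrArg (fun p : ℕ+ × ℕ+ × ℕ+ => p.2.1) h
    have h3 : (k:ℕ) = (l:ℕ) := by
      have := congrArg (fun p : ℕ+ => (p:ℕ)) h2
      simpa [padd] using this
    rw [Fin.ext h3]
  have hf := hs.comp_injective hι
  have h : a₁ + (a₂ + a₁₂ + -b) < -2 := by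
    apply exp_lt_sigma2 hf (C := 2^|a₂ + a₁₂ + -b|)
    rintro ⟨n, k⟩
    have hX1 : (1:ℝ) ≤ ((n:ℕ):ℝ) := by exact_mod_cast n.property
    have hX0 : (0:ℝ) < ((n:ℕ):ℝ) := lt_of_lt_of_le one_pos hX1
    have hXY : ((n:ℕ):ℝ) ≤ ((padd n k:ℕ):ℝ) := by rw [padd_coe]; exact le_add_of_nonneg_right (by positivity)
    have hY1 : (1:ℝ) ≤ ((padd n k:ℕ):ℝ) := le_trans hX1 hXY
    have hY0 : (0:ℝ) < ((padd n k:ℕ):ℝ) := lt_of_lt_of_le one_pos hY1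
    have hY2 : ((padd n k:ℕ):ℝ) ≤ 2 * ((n:ℕ):ℝ) := by
      rw [padd_coe]
      have : ((k:ℕ):ℝ) < ((n:ℕ):ℝ) := by exact_mod_cast k.isLt
      linarith
    have pair := (rpow_pair hX0 hXY hY2 (a₂ + a₁₂ + -b)).2
    have heq : (g3 a₁ a₂ a₃ a₁₂ b ∘
        fun s : Σ n : ℕ+, Fin (n:ℕ) => ((s.1, padd s.1 s.2, 1) : ℕ+ × ℕ+ × ℕ+)) ⟨n, k⟩
        = ((n:ℕ):ℝ)^a₁ * ((padd n k:ℕ):ℝ)^(a₂ + a₁₂ + -b) := by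
      simp only [Function.comp_apply, g3, PNat.one_coe, Nat.cast_one, Real.one_rpow, mul_one]
      rw [max_eq_right hXY, max_eq_left hY1, Real.rpow_add hY0, Real.rpow_add hY0]
      ring
    rw [heq]
    calc ((n:ℕ):ℝ)^(a₁ + (a₂ + a₁₂ + -b))
        = ((n:ℕ):ℝ)^a₁ * ((n:ℕ):ℝ)^(a₂ + a₁₂ + -b) := Real.rpow_add hX0 _ _
      _ ≤ ((n:ℕ):ℝ)^a₁ * (2^|a₂ + a₁₂ + -b| * ((padd n k:ℕ):ℝ)^(a₂ + a₁₂ + -b)) :=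
          mul_le_mul_of_nonneg_left pair (by positivity)
      _ = 2^|a₂ + a₁₂ + -b| * (((n:ℕ):ℝ)^a₁ * ((padd n k:ℕ):ℝ)^(a₂ + a₁₂ + -b)) := by ring
  linarith

lemma rev13 (hs : Summable (g3 a₁ a₂ a₃ a₁₂ b)) : a₁ + a₃ + a₁₂ - b < -2 := by
  have hι : Function.Injective
      (fun s : Σ n : ℕ+, Fin (n:ℕ) => ((s.1, 1, padd s.1 s.2) : ℕ+ × ℕ+ × ℕ+)) := by
    rintro ⟨n, k⟩ ⟨m, l⟩ h
    have h1 : n = m := congrArg Prod.fst h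
    subst h1
    have h2 : padd n k = padd n l := congrArg (fun p : ℕ+ × ℕ+ × ℕ+ => p.2.2) h
    have h3 : (k:ℕ) = (l:ℕ) := by
      have := congrArg (fun p : ℕ+ => (p:ℕ)) h2
      simpa [padd] using this
    rw [Fin.ext h3]
  have hf := hs.comp_injective hι
  have h : a₁ + a₁₂ + (a₃ + -b) < -2 := by
    apply exp_lt_sigma2 hf (C := 2^|a₃ + -b|)
    rintro ⟨n, k⟩
    have hX1 : (1:ℝ) ≤ ((n:ℕ):ℝ) := by exact_mod_cast n.property
    have hX0 : (0:ℝ) < ((n:ℕ):ℝ) := lt_of_lt_of_le one_pos hX1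
    have hXY : ((n:ℕ):ℝ) ≤ ((padd n k:ℕ):ℝ) := by rw [padd_coe]; exact le_add_of_nonneg_right (by positivity)
    have hY1 : (1:ℝ) ≤ ((padd n k:ℕ):ℝ) := le_trans hX1 hXY
    have hY0 : (0:ℝ) < ((padd n k:ℕ):ℝ) := lt_of_lt_of_le one_pos hY1
    have hY2 : ((padd n k:ℕ):ℝ) ≤ 2 * ((n:ℕ):ℝ) := by
      rw [padd_coe]
      have : ((k:ℕ):ℝ) < ((n:ℕ):ℝ) := by exact_mod_cast k.isLt
      linarith
    have pair := (rpow_pair hX0 hXY hY2 (a₃ + -b)).2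
    have heq : (g3 a₁ a₂ a₃ a₁₂ b ∘
        fun s : Σ n : ℕ+, Fin (n:ℕ) => ((s.1, 1, padd s.1 s.2) : ℕ+ × ℕ+ × ℕ+)) ⟨n, k⟩
        = ((n:ℕ):ℝ)^(a₁ + a₁₂) * ((padd n k:ℕ):ℝ)^(a₃ + -b) := by
      simp only [Function.comp_apply, g3, PNat.one_coe, Nat.cast_one, Real.one_rpow, mul_one]
      rw [max_eq_left hX1, max_eq_right hXY, Real.rpow_add hY0, Real.rpow_add hX0]
      ring
    rw [heq]
    calc ((n:ℕ):ℝ)^(a₁ + a₁₂ + (a₃ + -b))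
        = ((n:ℕ):ℝ)^(a₁ + a₁₂) * ((n:ℕ):ℝ)^(a₃ + -b) := Real.rpow_add hX0 _ _
      _ ≤ ((n:ℕ):ℝ)^(a₁ + a₁₂) * (2^|a₃ + -b| * ((padd n k:ℕ):ℝ)^(a₃ + -b)) :=
          mul_le_mul_of_nonneg_left pair (by positivity)
      _ = 2^|a₃ + -b| * (((n:ℕ):ℝ)^(a₁ + a₁₂) * ((padd n k:ℕ):ℝ)^(a₃ + -b)) := by ring
  linarith

lemma rev23 (hs : Summable (g3 a₁ a₂ a₃ a₁₂ b)) : a₂ + a₃ + a₁₂ - b < -2 := by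
  have hι : Function.Injective
      (fun s : Σ n : ℕ+, Fin (n:ℕ) => ((1, s.1, padd s.1 s.2) : ℕ+ × ℕ+ × ℕ+)) := by
    rintro ⟨n, k⟩ ⟨m, l⟩ h
    have h1 : n = m := congrArg (fun p : ℕ+ × ℕ+ × ℕ+ => p.2.1) h
    subst h1
    have h2 : padd n k = padd n l := congrArg (fun p : ℕ+ × ℕ+ × ℕ+ => p.2.2) h
    have h3 : (k:ℕ) = (l:ℕ) := by
      have := congrArg (fun p : ℕ+ => (p:ℕ)) h2
      simpa [padd] using this
    rw [Fin.ext h3]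
  have hf := hs.comp_injective hι
  have h : a₂ + a₁₂ + (a₃ + -b) < -2 := by
    apply exp_lt_sigma2 hf (C := 2^|a₃ + -b|)
    rintro ⟨n, k⟩
    have hX1 : (1:ℝ) ≤ ((n:ℕ):ℝ) := by exact_mod_cast n.property
    have hX0 : (0:ℝ) < ((n:ℕ):ℝ) := lt_of_lt_of_le one_pos hX1
    have hXY : ((n:ℕ):ℝ) ≤ ((padd n k:ℕ):ℝ) := by rw [padd_coe]; exact le_add_of_nonneg_right (by positivity)
    have hY1 : (1:ℝ) ≤ ((padd n k:ℕ):ℝ) := le_trans hX1 hXY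
    have hY0 : (0:ℝ) < ((padd n k:ℕ):ℝ) := lt_of_lt_of_le one_pos hY1
    have hY2 : ((padd n k:ℕ):ℝ) ≤ 2 * ((n:ℕ):ℝ) := by
      rw [padd_coe]
      have : ((k:ℕ):ℝ) < ((n:ℕ):ℝ) := by exact_mod_cast k.isLt
      linarith
    have pair := (rpow_pair hX0 hXY hY2 (a₃ + -b)).2
    have heq : (g3 a₁ a₂ a₃ a₁₂ b ∘
        fun s : Σ n : ℕ+, Fin (n:ℕ) => ((1, s.1, padd s.1 s.2) : ℕ+ × ℕ+ × ℕ+)) ⟨n, k⟩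
        = ((n:ℕ):ℝ)^(a₂ + a₁₂) * ((padd n k:ℕ):ℝ)^(a₃ + -b) := by
      simp only [Function.comp_apply, g3, PNat.one_coe, Nat.cast_one, Real.one_rpow, one_mul]
      rw [max_eq_right hX1, max_eq_right hXY, Real.rpow_add hY0, Real.rpow_add hX0]
      ring
    rw [heq]
    calc ((n:ℕ):ℝ)^(a₂ + a₁₂ + (a₃ + -b))
        = ((n:ℕ):ℝ)^(a₂ + a₁₂) * ((n:ℕ):ℝ)^(a₃ + -b) := Real.rpow_add hX0 _ _
      _ ≤ ((n:ℕ):ℝ)^(a₂ + a₁₂) * (2^|a₃ + -b| * ((padd n k:ℕ):ℝ)^(a₃ + -b)) :=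
          mul_le_mul_of_nonneg_left pair (by positivity)
      _ = 2^|a₃ + -b| * (((n:ℕ):ℝ)^(a₂ + a₁₂) * ((padd n k:ℕ):ℝ)^(a₃ + -b)) := by ring
  linarith

lemma rev123 (hs : Summable (g3 a₁ a₂ a₃ a₁₂ b)) : a₁ + a₂ + a₃ + a₁₂ - b < -3 := by
  have hι : Function.Injective
      (fun s : Σ n : ℕ+, Fin (n:ℕ) × Fin (n:ℕ) =>
        ((s.1, padd s.1 s.2.1, padd s.1 s.2.2) : ℕ+ × ℕ+ × ℕ+)) := by
    rintro ⟨n, k, k'⟩ ⟨m, l, l'⟩ h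
    have h1 : n = m := congrArg Prod.fst h
    subst h1
    have h2 : padd n k = padd n l := congrArg (fun p : ℕ+ × ℕ+ × ℕ+ => p.2.1) h
    have h2' : padd n k' = padd n l' := congrArg (fun p : ℕ+ × ℕ+ × ℕ+ => p.2.2) h
    have h3 : (k:ℕ) = (l:ℕ) := by
      have := congrArg (fun p : ℕ+ => (p:ℕ)) h2
      simpa [padd] using this
    have h3' : (k':ℕ) = (l':ℕ) := by
      have := congrArg (fun p : ℕ+ => (p:ℕ)) h2'
      simpa [padd] using this
    rw [Fin.ext h3, Fin.ext h3']
  have hf := hs.comp_injective hι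
  have h : a₁ + a₂ + a₃ + a₁₂ + -b < -3 := by
    apply exp_lt_sigma3 hf (C := 2^|a₂| * 2^|a₃| * 2^|a₁₂| * 2^|(-b)|)
    rintro ⟨n, k, l⟩
    set X : ℝ := ((n:ℕ):ℝ) with hXd
    set Y : ℝ := ((padd n k:ℕ):ℝ) with hYd
    set Z : ℝ := ((padd n l:ℕ):ℝ) with hZd
    have hX1 : (1:ℝ) ≤ X := by rw [hXd]; exact_mod_cast n.property
    have hX0 : (0:ℝ) < X := lt_of_lt_of_le one_pos hX1
    have hXY : X ≤ Y := by rw [hXd, hYd, padd_coe]; exact le_add_of_nonneg_right (by positivity)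
    have hXZ : X ≤ Z := by rw [hXd, hZd, padd_coe]; exact le_add_of_nonneg_right (by positivity)
    have hY0 : (0:ℝ) < Y := lt_of_lt_of_le hX0 hXY
    have hZ0 : (0:ℝ) < Z := lt_of_lt_of_le hX0 hXZ
    have hY2 : Y ≤ 2 * X := by
      rw [hXd, hYd, padd_coe]
      have : ((k:ℕ):ℝ) < ((n:ℕ):ℝ) := by exact_mod_cast k.isLt
      linarith
    have hZ2 : Z ≤ 2 * X := by
      rw [hXd, hZd, padd_coe]
      have : ((l:ℕ):ℝ) < ((n:ℕ):ℝ) := by exact_mod_cast l.isLt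
      linarith
    have hXM : X ≤ max Y Z := le_trans hXY (le_max_left _ _)
    have hM2 : max Y Z ≤ 2 * X := max_le hY2 hZ2
    have bY := (rpow_pair hX0 hXY hY2 a₂).2
    have bZ := (rpow_pair hX0 hXZ hZ2 a₃).2
    have bY12 := (rpow_pair hX0 hXY hY2 a₁₂).2
    have bM := (rpow_pair hX0 hXM hM2 (-b)).2
    have heq : (g3 a₁ a₂ a₃ a₁₂ b ∘
        fun s : Σ n : ℕ+, Fin (n:ℕ) × Fin (n:ℕ) =>
          ((s.1, padd s.1 s.2.1, padd s.1 s.2.2) : ℕ+ × ℕ+ × ℕ+)) ⟨n, k, l⟩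
        = X^a₁ * Y^a₂ * Z^a₃ * Y^a₁₂ * (max Y Z)^(-b) := by
      simp only [Function.comp_apply, g3]
      rw [max_eq_right hXY]
    rw [heq]
    calc X^(a₁ + a₂ + a₃ + a₁₂ + -b)
        = X^a₁ * X^a₂ * X^a₃ * X^a₁₂ * X^(-b) := by
          rw [Real.rpow_add hX0, Real.rpow_add hX0, Real.rpow_add hX0, Real.rpow_add hX0]
      _ ≤ X^a₁ * (2^|a₂| * Y^a₂) * (2^|a₃| * Z^a₃) * (2^|a₁₂| * Y^a₁₂)
            * (2^|(-b)| * (max Y Z)^(-b)) := by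
          gcongr X^a₁ * ?_ * ?_ * ?_ * ?_
      _ = 2^|a₂| * 2^|a₃| * 2^|a₁₂| * 2^|(-b)|
            * (X^a₁ * Y^a₂ * Z^a₃ * Y^a₁₂ * (max Y Z)^(-b)) := by ring
  linarith

end rev2v


def eqv3 : (ℕ+ × ℕ+ × ℕ+) ≃ (Fin 3 → ℕ+) :=
  { toFun := fun t => ![t.1, t.2.1, t.2.2]
    invFun := fun v => (v 0, v 1, v 2)
    left_inv := fun t => rfl
    right_inv := fun v => by
      funext i
      fin_cases i <;> rfl }

/-- Convergence criterion for
`∑_{i ∈ ℕ₊³} i₁^{a₁} i₂^{a₂} i₃^{a₃} (i₁+i₂)^{a₁₂} / (i₁+i₂+i₃)^b`. -/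
theorem zeta_series_three_vars_iff (a₁ a₂ a₃ a₁₂ b : ℝ) :
    Summable (fun i : Fin 3 → ℕ+ =>
        ((i 0 : ℕ) : ℝ) ^ a₁ * ((i 1 : ℕ) : ℝ) ^ a₂ * ((i 2 : ℕ) : ℝ) ^ a₃ *
          (((i 0 : ℕ) : ℝ) + ((i 1 : ℕ) : ℝ)) ^ a₁₂ /
          (((i 0 : ℕ) : ℝ) + ((i 1 : ℕ) : ℝ) + ((i 2 : ℕ) : ℝ)) ^ b) ↔
      ∀ J : Finset (Fin 3), J.Nonempty →
        (J.card : ℝ) + ∑ j ∈ J, ![a₁, a₂, a₃] j +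
          (if (0 : Fin 3) ∈ J ∨ (1 : Fin 3) ∈ J then a₁₂ else 0) < b := by
  have hE : Summable (fun i : Fin 3 → ℕ+ =>
        ((i 0 : ℕ) : ℝ) ^ a₁ * ((i 1 : ℕ) : ℝ) ^ a₂ * ((i 2 : ℕ) : ℝ) ^ a₃ *
          (((i 0 : ℕ) : ℝ) + ((i 1 : ℕ) : ℝ)) ^ a₁₂ /
          (((i 0 : ℕ) : ℝ) + ((i 1 : ℕ) : ℝ) + ((i 2 : ℕ) : ℝ)) ^ b)
      ↔ Summable (g3 a₁ a₂ a₃ a₁₂ b) := by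
    rw [← Equiv.summable_iff eqv3, ← summable_F_iff_g3 a₁ a₂ a₃ a₁₂ b]
    exact summable_congr (fun t => rfl)
  rw [hE]
  constructor
  · intro h J hJ
    have r1 := rev1 h
    have r2 := rev2 h
    have r3 := rev3 h
    have r12 := rev12 h
    have r13 := rev13 h
    have r23 := rev23 h
    have r123 := rev123 h
    fin_cases J <;>
      simp_all [Finset.sum_insert, Finset.mem_insert] <;> linarith
  · intro h
    have h1 := h {0} (by simp)
    have h2 := h {1} (by simp)
    have h3 := h {2} (by simp)
    have h12 := h {0, 1} (by simp)
    have h13 := h {0, 2} (by simp)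
    have h23 := h {1, 2} (by simp)
    have h123 := h {0, 1, 2} (by simp)
    simp [Finset.sum_insert, Finset.mem_insert] at h1 h2 h3 h12 h13 h23 h123
    exact g3_summable a₁ a₂ a₃ a₁₂ b (by linarith) (by linarith) (by linarith)
      (by linarith) (by linarith) (by linarith) (by linarith)
end

section
/- Let a_1, a_2, a_3, a_4, a_{123}, b be real numbers. The series ∑_{i ∈ ℕ₊^4} i_1^{a_1} i_2^{a_2} i_3^{a_3} i_4^{a_4} (i_1 + i_2 + i_3)^{a_{123}} / (i_1 + i_2 + i_3 + i_4)^b converges if and only if for every nonempty subset J ⊆ {1, 2, 3, 4} one has b > |J| + ∑_{j ∈ J} a_j + a_{123}·[J ∩ {1,2,3} ≠ ∅], where [P] equals 1 if the condition P holds and 0 otherwise. -/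
namespace ZetaAux

open Finset

/-- max of first three coordinates -/
def m3 (k : Fin 4 → ℕ) : ℕ := max (max (k 0) (k 1)) (k 2)
/-- max of all four coordinates -/
def m4 (k : Fin 4 → ℕ) : ℕ := max (m3 k) (k 3)

def Jt (k : Fin 4 → ℕ) (t : ℕ) : Finset (Fin 4) := Finset.univ.filter (fun j => t < k j)

def nJ (k : Fin 4 → ℕ) (J : Finset (Fin 4)) : ℕ :=
  (if h : J.Nonempty then J.inf' h k else 0) - Jᶜ.sup k

lemma le_m4 (k : Fin 4 → ℕ) (j : Fin 4) : k j ≤ m4 k := by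
  fin_cases j <;> simp [m4, m3] <;> omega

lemma inf'_le_m4 (k : Fin 4 → ℕ) {J : Finset (Fin 4)} (h : J.Nonempty) :
    J.inf' h k ≤ m4 k := by
  obtain ⟨j, hj⟩ := h
  exact le_trans (Finset.inf'_le k hj) (le_m4 k j)

lemma fiber_card (k : Fin 4 → ℕ) {J : Finset (Fin 4)} (hJ : J.Nonempty) :
    ((Finset.range (m4 k)).filter (fun t => Jt k t = J)).card = nJ k J := by
  have hle : J.inf' hJ k ≤ m4 k := inf'_le_m4 k hJ
  have hset : (Finset.range (m4 k)).filter (fun t => Jt k t = J)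
      = Finset.Ico (Jᶜ.sup k) (J.inf' hJ k) := by
    ext t
    simp only [Finset.mem_filter, Finset.mem_range, Finset.mem_Ico]
    constructor
    · rintro ⟨ht, hJt⟩
      have h1 : Jᶜ.sup k ≤ t := by
        apply Finset.sup_le
        intro j hj
        rw [Finset.mem_compl] at hj
        by_contra hc
        exact hj (hJt ▸ (by simp [Jt, Nat.lt_of_not_le hc] : j ∈ Jt k t))
      have h2 : t < J.inf' hJ k := by
        rw [Finset.lt_inf'_iff]
        intro j hj
        have : j ∈ Jt k t := hJt ▸ hj
        simpa [Jt] using this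
      exact ⟨h1, h2⟩
    · rintro ⟨h1, h2⟩
      constructor
      · exact lt_of_lt_of_le h2 hle
      · ext j
        simp only [Jt, Finset.mem_filter, Finset.mem_univ, true_and]
        constructor
        · intro ht
          by_contra hj
          have : k j ≤ Jᶜ.sup k := Finset.le_sup (by simpa using hj)
          omega
        · intro hj
          exact lt_of_lt_of_le h2 (Finset.inf'_le k hj)
  rw [hset, Nat.card_Ico, nJ, dif_pos hJ]

end ZetaAux

namespace ZetaAux
open Finset

lemma sum_nJ (k : Fin 4 → ℕ) (P : Finset (Fin 4) → Prop) [DecidablePred P]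
    (hP : ∀ J, P J → J.Nonempty) :
    ∑ J ∈ Finset.univ.filter P, nJ k J
      = ((Finset.range (m4 k)).filter (fun t => P (Jt k t))).card := by
  rw [Finset.card_eq_sum_card_fiberwise
    (f := Jt k) (t := Finset.univ.filter P)
    (fun t ht => by simp only [Finset.mem_coe, Finset.mem_filter, Finset.mem_univ, true_and] at ht ⊢
                    exact ht.2)]
  apply Finset.sum_congr rfl
  intro J hJ
  simp only [Finset.mem_filter, Finset.mem_univ, true_and] at hJ
  rw [← fiber_card k (hP J hJ)]
  congr 1
  rw [Finset.filter_filter]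
  apply Finset.filter_congr
  intro t _
  constructor
  · intro h; exact ⟨by rw [h]; exact hJ, h⟩
  · exact And.right

lemma sum_nJ_mem (k : Fin 4 → ℕ) (j : Fin 4) :
    ∑ J ∈ Finset.univ.filter (fun J : Finset (Fin 4) => j ∈ J), nJ k J = k j := by
  rw [sum_nJ k _ (fun J hJ => ⟨j, hJ⟩)]
  have : (Finset.range (m4 k)).filter (fun t => j ∈ Jt k t) = Finset.range (k j) := by
    ext t
    have := le_m4 k j
    simp only [Jt, Finset.mem_filter, Finset.mem_range, Finset.mem_univ, true_and]
    omega
  rw [this, Finset.card_range]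

lemma sum_nJ_trip (k : Fin 4 → ℕ) :
    ∑ J ∈ Finset.univ.filter
        (fun J : Finset (Fin 4) => (0:Fin 4) ∈ J ∨ (1:Fin 4) ∈ J ∨ (2:Fin 4) ∈ J), nJ k J
      = m3 k := by
  rw [sum_nJ k _ (fun J hJ => by
    rcases hJ with h | h | h
    exacts [⟨_, h⟩, ⟨_, h⟩, ⟨_, h⟩])]
  have : (Finset.range (m4 k)).filter
      (fun t => (0:Fin 4) ∈ Jt k t ∨ (1:Fin 4) ∈ Jt k t ∨ (2:Fin 4) ∈ Jt k t)
      = Finset.range (m3 k) := by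
    ext t
    simp only [Jt, Finset.mem_filter, Finset.mem_range, Finset.mem_univ, true_and, m3, m4]
    omega
  rw [this, Finset.card_range]

lemma sum_nJ_ne (k : Fin 4 → ℕ) :
    ∑ J ∈ Finset.univ.filter (fun J : Finset (Fin 4) => J.Nonempty), nJ k J = m4 k := by
  rw [sum_nJ k _ (fun J hJ => hJ)]
  have : (Finset.range (m4 k)).filter (fun t => (Jt k t).Nonempty) = Finset.range (m4 k) := by
    apply Finset.filter_true_of_mem
    intro t ht
    simp only [Finset.mem_range] at ht
    have : t < m4 k := ht
    simp only [m4, m3] at this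
    rcases Nat.lt_or_ge t (k 3) with h | h
    · exact ⟨3, by simp [Jt, h]⟩
    · rcases Nat.lt_or_ge t (k 2) with h2 | h2
      · exact ⟨2, by simp [Jt, h2]⟩
      · rcases Nat.lt_or_ge t (k 1) with h1 | h1
        · exact ⟨1, by simp [Jt, h1]⟩
        · exact ⟨0, by simp [Jt]; omega⟩
  rw [this, Finset.card_range]

end ZetaAux


namespace ZetaAux

lemma summable_pi_prod_fin :
    ∀ (m : ℕ) (g : Fin m → ℕ → ℝ), (∀ i n, 0 ≤ g i n) → (∀ i, Summable (g i)) →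
      Summable (fun n : Fin m → ℕ => ∏ i, g i (n i)) := by
  intro m
  induction m with
  | zero =>
    intro g _ _
    simpa using (Summable.of_finite (f := fun _ : Fin 0 → ℕ => (1:ℝ)))
  | succ m ih =>
    intro g h0 hs
    have htail : Summable (fun n : Fin m → ℕ => ∏ i : Fin m, g i.succ (n i)) :=
      ih (fun i => g i.succ) (fun i n => h0 _ n) (fun i => hs i.succ)
    have hbase : Summable (fun p : ℕ × (Fin m → ℕ) =>
        g 0 p.1 * ∏ i : Fin m, g i.succ (p.2 i)) :=
      Summable.mul_of_nonneg (f := g 0)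
        (g := fun n : Fin m → ℕ => ∏ i : Fin m, g i.succ (n i))
        (hs 0) htail (fun n => h0 0 n)
        (fun p => Finset.prod_nonneg fun i _ => h0 _ _)
    have hcomp : (fun n : Fin (m+1) → ℕ => ∏ i, g i (n i)) ∘
        (Fin.consEquiv (fun _ : Fin (m+1) => ℕ))
        = (fun p : ℕ × (Fin m → ℕ) => g 0 p.1 * ∏ i : Fin m, g i.succ (p.2 i)) := by
      funext p
      simp only [Function.comp_apply, Fin.consEquiv_apply]
      rw [Fin.prod_univ_succ]
      simp
    exact (Equiv.summable_iff (Fin.consEquiv (fun _ : Fin (m+1) => ℕ))).1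
      (hcomp ▸ hbase)

lemma summable_pi_prod {ι : Type*} [Fintype ι] (g : ι → ℕ → ℝ)
    (h0 : ∀ i n, 0 ≤ g i n) (hs : ∀ i, Summable (g i)) :
    Summable (fun n : ι → ℕ => ∏ i, g i (n i)) := by
  obtain e := Fintype.equivFin ι
  have key := summable_pi_prod_fin (Fintype.card ι) (fun j => g (e.symm j))
    (fun j n => h0 _ n) (fun j => hs _)
  have hcomp : (fun n' : Fin (Fintype.card ι) → ℕ => ∏ j, g (e.symm j) (n' j)) ∘
      (Equiv.arrowCongr e (Equiv.refl ℕ))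
      = (fun n : ι → ℕ => ∏ i, g i (n i)) := by
    funext n
    simp only [Function.comp_apply, Equiv.arrowCongr_apply, Equiv.refl_apply]
    exact Equiv.prod_comp e.symm (fun i => g i (n (i)))
    |>.trans rfl
  have := (Equiv.summable_iff (Equiv.arrowCongr e (Equiv.refl ℕ))
    (f := fun n' : Fin (Fintype.card ι) → ℕ => ∏ j, g (e.symm j) (n' j))).2 key
  rwa [hcomp] at this

lemma summable_iff_of_sandwich {κ : Type*} {u v : κ → ℝ} {c C : ℝ} (hc : 0 < c)
    (hv : ∀ k, 0 ≤ v k) (h1 : ∀ k, c * v k ≤ u k) (h2 : ∀ k, u k ≤ C * v k) :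
    Summable u ↔ Summable v := by
  constructor
  · intro h
    apply Summable.of_nonneg_of_le hv (fun k => ?_) (h.mul_left c⁻¹)
    have hv' : v k = c⁻¹ * (c * v k) := by field_simp
    rw [hv']
    exact mul_le_mul_of_nonneg_left (h1 k) (inv_nonneg.mpr hc.le)
  · intro h
    exact Summable.of_nonneg_of_le
      (fun k => le_trans (mul_nonneg hc.le (hv k)) (h1 k)) h2 (h.mul_left C)

end ZetaAux


namespace ZetaAux

lemma rpow_upper {x y R : ℝ} (a : ℝ) (hy : 0 < y) (hR : 0 < R)
    (h1 : y ≤ x) (h2 : x ≤ R * y) : x ^ a ≤ max 1 (R ^ a) * y ^ a := by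
  have hx : 0 < x := lt_of_lt_of_le hy h1
  rcases le_or_gt 0 a with ha | ha
  · calc x ^ a ≤ (R * y) ^ a := Real.rpow_le_rpow hx.le h2 ha
      _ = R ^ a * y ^ a := Real.mul_rpow hR.le hy.le
      _ ≤ max 1 (R ^ a) * y ^ a := by
          gcongr
          exact le_max_right _ _
  · calc x ^ a ≤ y ^ a := Real.rpow_le_rpow_of_nonpos hy h1 ha.le
      _ = 1 * y ^ a := (one_mul _).symm
      _ ≤ max 1 (R ^ a) * y ^ a := by
          gcongr
          exact le_max_left _ _

lemma rpow_lower {x y R : ℝ} (a : ℝ) (hy : 0 < y) (hR : 0 < R)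
    (h1 : y ≤ x) (h2 : x ≤ R * y) : min 1 (R ^ a) * y ^ a ≤ x ^ a := by
  have hx : 0 < x := lt_of_lt_of_le hy h1
  rcases le_or_gt 0 a with ha | ha
  · calc min 1 (R ^ a) * y ^ a ≤ 1 * y ^ a := by
          gcongr
          exact min_le_left _ _
      _ = y ^ a := one_mul _
      _ ≤ x ^ a := Real.rpow_le_rpow hy.le h1 ha
  · calc min 1 (R ^ a) * y ^ a ≤ R ^ a * y ^ a := by
          gcongr
          exact min_le_right _ _
      _ = (R * y) ^ a := (Real.mul_rpow hR.le hy.le).symm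
      _ ≤ x ^ a := Real.rpow_le_rpow_of_nonpos (by positivity) h2 ha.le

/-- binary decomposition bijection -/
def Psi (p : Σ k : Fin 4 → ℕ, ∀ j, Fin (2 ^ (k j))) : Fin 4 → ℕ+ :=
  fun j => ⟨2 ^ (p.1 j) + (p.2 j : ℕ), by positivity⟩

lemma Psi_bijective : Function.Bijective Psi := by
  constructor
  · rintro ⟨k, w⟩ ⟨k', w'⟩ h
    have hcomp : ∀ j, 2 ^ (k j) + (w j : ℕ) = 2 ^ (k' j) + (w' j : ℕ) := by
      intro j
      have h' := congrFun h j
      have h'' : ((Psi ⟨k, w⟩ j : ℕ+) : ℕ) = ((Psi ⟨k', w'⟩ j : ℕ+) : ℕ) :=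
        congrArg _ h'
      simpa [Psi] using h''
    have hk : k = k' := by
      funext j
      have h1 : (w j : ℕ) < 2 ^ (k j) := (w j).isLt
      have h2 : (w' j : ℕ) < 2 ^ (k' j) := (w' j).isLt
      have := hcomp j
      by_contra hne
      rcases Nat.lt_or_ge (k j) (k' j) with hlt | hge
      · have : 2 ^ (k j + 1) ≤ 2 ^ (k' j) := Nat.pow_le_pow_right (by norm_num) hlt
        have : 2 ^ (k j) * 2 ≤ 2 ^ (k' j) := by rwa [Nat.pow_succ] at this
        omega
      · have hlt' : k' j < k j := by omega
        have : 2 ^ (k' j + 1) ≤ 2 ^ (k j) := Nat.pow_le_pow_right (by norm_num) hlt'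
        have : 2 ^ (k' j) * 2 ≤ 2 ^ (k j) := by rwa [Nat.pow_succ] at this
        omega
    subst hk
    have hw : w = w' := by
      funext j
      have := hcomp j
      exact Fin.ext (by omega)
    rw [hw]
  · intro i
    set K : Fin 4 → ℕ := fun j => Nat.log 2 ((i j : ℕ)) with hK
    have h1 : ∀ j, 2 ^ K j ≤ (i j : ℕ) := fun j => Nat.pow_log_le_self 2 (i j).pos.ne'
    have h2 : ∀ j, (i j : ℕ) < 2 ^ K j * 2 := by
      intro j
      have := Nat.lt_pow_succ_log_self (by norm_num : 1 < 2) ((i j : ℕ))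
      rwa [Nat.pow_succ] at this
    refine ⟨⟨K, fun j => ⟨(i j : ℕ) - 2 ^ K j, by have := h1 j; have := h2 j; omega⟩⟩, ?_⟩
    funext j
    refine Subtype.ext ?_
    show 2 ^ K j + ((i j : ℕ) - 2 ^ K j) = (i j : ℕ)
    have := h1 j
    omega

end ZetaAux


namespace ZetaAux
open Finset


variable (a' : Fin 4 → ℝ) (A B : ℝ)

def cJ (J : Finset (Fin 4)) : ℝ :=
  (J.card : ℝ) + ∑ j ∈ J, a' j +
    (if (0:Fin 4) ∈ J ∨ (1:Fin 4) ∈ J ∨ (2:Fin 4) ∈ J then A else 0) - B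

def Lf (k : Fin 4 → ℕ) : ℝ :=
  (∑ j, (a' j + 1) * (k j : ℝ)) + A * (m3 k : ℝ) - B * (m4 k : ℝ)


lemma L_eq (k : Fin 4 → ℕ) :
    Lf a' A B k = ∑ J ∈ Finset.univ.filter (fun J : Finset (Fin 4) => J.Nonempty),
      cJ a' A B J * (nJ k J : ℝ) := by
  have expand : ∀ J ∈ Finset.univ.filter (fun J : Finset (Fin 4) => J.Nonempty),
      cJ a' A B J * (nJ k J : ℝ)
        = (∑ j, (if j ∈ J then (a' j + 1) * (nJ k J : ℝ) else 0))
          + (if (0:Fin 4) ∈ J ∨ (1:Fin 4) ∈ J ∨ (2:Fin 4) ∈ J then A * (nJ k J : ℝ) else 0)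
          - B * (nJ k J : ℝ) := by
    intro J _
    rw [Finset.sum_ite_mem, Finset.univ_inter, cJ, ← Finset.sum_mul,
      Finset.sum_add_distrib, Finset.sum_const, nsmul_eq_mul, mul_one]
    split_ifs <;> ring
  rw [Finset.sum_congr rfl expand, Finset.sum_sub_distrib, Finset.sum_add_distrib]
  have part1 : ∑ J ∈ Finset.univ.filter (fun J : Finset (Fin 4) => J.Nonempty),
      (∑ j, (if j ∈ J then (a' j + 1) * (nJ k J : ℝ) else 0))
        = ∑ j, (a' j + 1) * (k j : ℝ) := by
    rw [Finset.sum_comm]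
    apply Finset.sum_congr rfl
    intro j _
    rw [← Finset.sum_filter, Finset.filter_filter]
    have hfil : Finset.univ.filter (fun J : Finset (Fin 4) => J.Nonempty ∧ j ∈ J)
        = Finset.univ.filter (fun J : Finset (Fin 4) => j ∈ J) := by
      apply Finset.filter_congr
      intro J _
      constructor
      · exact And.right
      · intro h; exact ⟨⟨j, h⟩, h⟩
    rw [hfil, ← Finset.mul_sum, ← Nat.cast_sum, sum_nJ_mem]
  have part2 : ∑ J ∈ Finset.univ.filter (fun J : Finset (Fin 4) => J.Nonempty),
      (if (0:Fin 4) ∈ J ∨ (1:Fin 4) ∈ J ∨ (2:Fin 4) ∈ J then A * (nJ k J : ℝ) else 0)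
        = A * (m3 k : ℝ) := by
    rw [← Finset.sum_filter, Finset.filter_filter]
    have hfil : Finset.univ.filter (fun J : Finset (Fin 4) =>
        J.Nonempty ∧ ((0:Fin 4) ∈ J ∨ (1:Fin 4) ∈ J ∨ (2:Fin 4) ∈ J))
        = Finset.univ.filter
          (fun J : Finset (Fin 4) => (0:Fin 4) ∈ J ∨ (1:Fin 4) ∈ J ∨ (2:Fin 4) ∈ J) := by
      apply Finset.filter_congr
      intro J _
      constructor
      · exact And.right
      · intro h
        refine ⟨?_, h⟩
        rcases h with h | h | h
        exacts [⟨_, h⟩, ⟨_, h⟩, ⟨_, h⟩]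
    rw [hfil, ← Finset.mul_sum, ← Nat.cast_sum, sum_nJ_trip]
  have part3 : ∑ J ∈ Finset.univ.filter (fun J : Finset (Fin 4) => J.Nonempty),
      B * (nJ k J : ℝ) = B * (m4 k : ℝ) := by
    rw [← Finset.mul_sum, ← Nat.cast_sum, sum_nJ_ne]
  rw [part1, part2, part3, Lf]

end ZetaAux

namespace Core
open ZetaAux Finset

lemma two_rpow_pos (x : ℝ) : (0:ℝ) < (2:ℝ) ^ x := Real.rpow_pos_of_pos two_pos x

theorem core (a' : Fin 4 → ℝ) (A B : ℝ) :
    Summable (fun k : Fin 4 → ℕ => (2:ℝ) ^ Lf a' A B k) ↔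
      ∀ J : Finset (Fin 4), J.Nonempty →
        (J.card : ℝ) + ∑ j ∈ J, a' j +
          (if (0:Fin 4) ∈ J ∨ (1:Fin 4) ∈ J ∨ (2:Fin 4) ∈ J then A else 0) < B := by
  constructor
  · intro h J hJ
    set ι : ℕ → (Fin 4 → ℕ) := fun n j => if j ∈ J then n else 0 with hι
    have hinj : Function.Injective ι := by
      obtain ⟨j0, hj0⟩ := hJ
      intro m n hmn
      have := congrFun hmn j0
      simpa [hι, hj0] using this
    have hsum := h.comp_injective hinj
    have hval : ∀ n : ℕ, (2:ℝ) ^ Lf a' A B (ι n) = ((2:ℝ) ^ (cJ a' A B J)) ^ n := by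
      intro n
      have hm3 : m3 (ι n) = if (0:Fin 4) ∈ J ∨ (1:Fin 4) ∈ J ∨ (2:Fin 4) ∈ J then n else 0 := by
        simp only [hι, m3]
        by_cases h0 : (0:Fin 4) ∈ J <;> by_cases h1 : (1:Fin 4) ∈ J <;>
          by_cases h2 : (2:Fin 4) ∈ J <;> simp [h0, h1, h2] <;> omega
      have hm4 : m4 (ι n) = n := by
        obtain ⟨j0, hj0⟩ := hJ
        simp only [hι, m4, m3]
        by_cases h0 : (0:Fin 4) ∈ J <;> by_cases h1 : (1:Fin 4) ∈ J <;>
          by_cases h2 : (2:Fin 4) ∈ J <;> by_cases h3 : (3:Fin 4) ∈ J <;>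
          [skip; skip; skip; skip; skip; skip; skip; skip; skip; skip; skip; skip; skip; skip;
           skip; exact absurd hj0 (by fin_cases j0 <;> simp_all)] <;>
          simp [h0, h1, h2, h3] <;> omega
      have hsum' : (∑ j, (a' j + 1) * ((ι n j : ℕ) : ℝ))
          = ((J.card : ℝ) + ∑ j ∈ J, a' j) * n := by
        have : ∀ j : Fin 4, (a' j + 1) * ((ι n j : ℕ) : ℝ)
            = if j ∈ J then (a' j + 1) * (n : ℝ) else 0 := by
          intro j
          simp only [hι]
          split_ifs <;> simp
        rw [Finset.sum_congr rfl (fun j _ => this j), Finset.sum_ite_mem, Finset.univ_inter,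
          ← Finset.sum_mul, Finset.sum_add_distrib, Finset.sum_const, nsmul_eq_mul, mul_one]
        ring
      rw [Lf, hm3, hm4, hsum']
      have : ((J.card : ℝ) + ∑ j ∈ J, a' j) * n
          + A * ((if (0:Fin 4) ∈ J ∨ (1:Fin 4) ∈ J ∨ (2:Fin 4) ∈ J then (n:ℕ) else 0 : ℕ) : ℝ)
          - B * (n : ℝ) = cJ a' A B J * n := by
        rw [cJ]
        split_ifs <;> push_cast <;> ring
      rw [this, Real.rpow_mul (by norm_num), Real.rpow_natCast]
    have hgeom : Summable (fun n : ℕ => ((2:ℝ) ^ (cJ a' A B J)) ^ n) := by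
      have := hsum
      simp only [Function.comp_def] at this
      exact (summable_congr hval).1 this
    have hlt : (2:ℝ) ^ (cJ a' A B J) < 1 := by
      have := summable_geometric_iff_norm_lt_one.1 hgeom
      rwa [Real.norm_eq_abs, abs_of_nonneg (two_rpow_pos _).le] at this
    have : cJ a' A B J < 0 := by
      rcases (Real.rpow_lt_one_iff_of_pos two_pos).1 hlt with ⟨_, h⟩ | ⟨h, _⟩ <;> [exact h; norm_num at h]
    rw [cJ] at this
    linarith
  · intro hcond
    have hneg : ∀ J : Finset (Fin 4), J.Nonempty → cJ a' A B J < 0 := by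
      intro J hJ
      have := hcond J hJ
      rw [cJ]
      linarith
    set S := {J : Finset (Fin 4) // J.Nonempty}
    have hFs : Summable (fun n : S → ℕ => ∏ J : S, ((2:ℝ) ^ (cJ a' A B J.1)) ^ (n J)) := by
      apply summable_pi_prod
      · intro J n
        positivity
      · intro J
        exact summable_geometric_of_lt_one (two_rpow_pos _).le
          (Real.rpow_lt_one_of_one_lt_of_neg (by norm_num) (hneg J.1 J.2))
    set ι : (Fin 4 → ℕ) → (S → ℕ) := fun k J => nJ k J.1 with hι
    have hinj : Function.Injective ι := by
      intro k k' hkk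
      funext j
      have h1 := sum_nJ_mem k j
      have h2 := sum_nJ_mem k' j
      rw [← h1, ← h2]
      apply Finset.sum_congr rfl
      intro J hJ
      simp only [Finset.mem_filter, Finset.mem_univ, true_and] at hJ
      exact congrFun hkk ⟨J, ⟨j, hJ⟩⟩
    have hcomp : (fun k : Fin 4 → ℕ => (2:ℝ) ^ Lf a' A B k)
        = (fun n : S → ℕ => ∏ J : S, ((2:ℝ) ^ (cJ a' A B J.1)) ^ (n J)) ∘ ι := by
      funext k
      simp only [Function.comp_apply, hι]
      rw [L_eq, Real.rpow_sum_of_pos two_pos]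
      rw [← Finset.prod_subtype (Finset.univ.filter (fun J : Finset (Fin 4) => J.Nonempty))
        (by intro J; simp) (fun J => ((2:ℝ) ^ (cJ a' A B J)) ^ (nJ k J))]
      apply Finset.prod_congr rfl
      intro J _
      rw [← Real.rpow_natCast ((2:ℝ) ^ (cJ a' A B J)) (nJ k J), ← Real.rpow_mul (by norm_num)]
    rw [hcomp]
    exact hFs.comp_injective hinj

end Core

open ZetaAux in
/-- Convergence criterion for
`∑_{i ∈ ℕ₊⁴} i₁^{a₁} i₂^{a₂} i₃^{a₃} i₄^{a₄} (i₁+i₂+i₃)^{a₁₂₃} / (i₁+i₂+i₃+i₄)^b`. -/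
theorem zeta_series_four_vars_triple_iff (a₁ a₂ a₃ a₄ a₁₂₃ b : ℝ) :
    Summable (fun i : Fin 4 → ℕ+ =>
        ((i 0 : ℕ) : ℝ) ^ a₁ * ((i 1 : ℕ) : ℝ) ^ a₂ * ((i 2 : ℕ) : ℝ) ^ a₃ *
          ((i 3 : ℕ) : ℝ) ^ a₄ *
          (((i 0 : ℕ) : ℝ) + ((i 1 : ℕ) : ℝ) + ((i 2 : ℕ) : ℝ)) ^ a₁₂₃ /
          (((i 0 : ℕ) : ℝ) + ((i 1 : ℕ) : ℝ) + ((i 2 : ℕ) : ℝ) + ((i 3 : ℕ) : ℝ)) ^ b) ↔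
      ∀ J : Finset (Fin 4), J.Nonempty →
        (J.card : ℝ) + ∑ j ∈ J, ![a₁, a₂, a₃, a₄] j +
          (if (0 : Fin 4) ∈ J ∨ (1 : Fin 4) ∈ J ∨ (2 : Fin 4) ∈ J then a₁₂₃ else 0) < b := by
  classical
  set F : (Fin 4 → ℕ+) → ℝ := fun i =>
      ((i 0 : ℕ) : ℝ) ^ a₁ * ((i 1 : ℕ) : ℝ) ^ a₂ * ((i 2 : ℕ) : ℝ) ^ a₃ *
        ((i 3 : ℕ) : ℝ) ^ a₄ *
        (((i 0 : ℕ) : ℝ) + ((i 1 : ℕ) : ℝ) + ((i 2 : ℕ) : ℝ)) ^ a₁₂₃ /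
        (((i 0 : ℕ) : ℝ) + ((i 1 : ℕ) : ℝ) + ((i 2 : ℕ) : ℝ) + ((i 3 : ℕ) : ℝ)) ^ b with hF
  have hf0 : ∀ i, 0 ≤ F i := fun i => by
    rw [hF]
    positivity
  set P : (Fin 4 → ℕ) → ℝ := fun k =>
      ((2:ℝ) ^ (k 0)) ^ a₁ * ((2:ℝ) ^ (k 1)) ^ a₂ * ((2:ℝ) ^ (k 2)) ^ a₃ *
        ((2:ℝ) ^ (k 3)) ^ a₄ * ((2:ℝ) ^ (m3 k)) ^ a₁₂₃ * ((2:ℝ) ^ (m4 k)) ^ (-b) with hP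
  set Cmin : ℝ := min 1 ((2:ℝ) ^ a₁) * min 1 ((2:ℝ) ^ a₂) * min 1 ((2:ℝ) ^ a₃) *
      min 1 ((2:ℝ) ^ a₄) * min 1 ((6:ℝ) ^ a₁₂₃) * min 1 ((8:ℝ) ^ (-b)) with hCm
  set Cmax : ℝ := max 1 ((2:ℝ) ^ a₁) * max 1 ((2:ℝ) ^ a₂) * max 1 ((2:ℝ) ^ a₃) *
      max 1 ((2:ℝ) ^ a₄) * max 1 ((6:ℝ) ^ a₁₂₃) * max 1 ((8:ℝ) ^ (-b)) with hCM
  have hCmin : 0 < Cmin := by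
    rw [hCm]
    have : ∀ c : ℝ, ∀ x : ℝ, 0 < x → 0 < min 1 (x ^ c) := fun c x hx =>
      lt_min one_pos (Real.rpow_pos_of_pos hx c)
    positivity
  -- pointwise two-sided bound
  have key : ∀ (k : Fin 4 → ℕ) (w : ∀ j, Fin (2 ^ (k j))),
      Cmin * P k ≤ F (Psi ⟨k, w⟩) ∧ F (Psi ⟨k, w⟩) ≤ Cmax * P k := by
    intro k w
    have hnat : ∀ j, ((Psi ⟨k, w⟩ j : ℕ+) : ℕ) = 2 ^ (k j) + (w j : ℕ) := fun j => rfl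
    have hwlt : ∀ j, (w j : ℕ) < 2 ^ (k j) := fun j => (w j).isLt
    have hxlo : ∀ j, (2:ℝ) ^ (k j) ≤ ((Psi ⟨k, w⟩ j : ℕ) : ℝ) := by
      intro j
      rw [hnat j]
      push_cast
      have : (0:ℝ) ≤ ((w j : ℕ) : ℝ) := by positivity
      linarith
    have hxhi : ∀ j, ((Psi ⟨k, w⟩ j : ℕ) : ℝ) ≤ 2 * (2:ℝ) ^ (k j) := by
      intro j
      rw [hnat j]
      push_cast
      have : ((w j : ℕ) : ℝ) < (2:ℝ) ^ (k j) := by exact_mod_cast hwlt j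
      linarith
    have hypos : ∀ n : ℕ, (0:ℝ) < (2:ℝ) ^ n := fun n => by positivity
    -- natural number bounds for the sums
    have e0 := hnat 0; have e1 := hnat 1; have e2 := hnat 2; have e3 := hnat 3
    have w0 := hwlt 0; have w1 := hwlt 1; have w2 := hwlt 2; have w3 := hwlt 3
    have p0 : 2 ^ (k 0) ≤ 2 ^ (m3 k) := Nat.pow_le_pow_right (by norm_num) (by simp [m3])
    have p1 : 2 ^ (k 1) ≤ 2 ^ (m3 k) := Nat.pow_le_pow_right (by norm_num) (by simp [m3])
    have p2 : 2 ^ (k 2) ≤ 2 ^ (m3 k) := Nat.pow_le_pow_right (by norm_num) (by simp [m3])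
    have q3 : 2 ^ (m3 k) ≤ 2 ^ (m4 k) := Nat.pow_le_pow_right (by norm_num) (by simp [m4])
    have q4 : 2 ^ (k 3) ≤ 2 ^ (m4 k) := Nat.pow_le_pow_right (by norm_num) (by simp [m4])
    have hm3cases : 2 ^ (m3 k) = 2 ^ (k 0) ∨ 2 ^ (m3 k) = 2 ^ (k 1) ∨ 2 ^ (m3 k) = 2 ^ (k 2) := by
      have : m3 k = k 0 ∨ m3 k = k 1 ∨ m3 k = k 2 := by simp [m3]; omega
      rcases this with h | h | h <;> rw [h] <;> tauto
    have hm4cases : 2 ^ (m4 k) = 2 ^ (m3 k) ∨ 2 ^ (m4 k) = 2 ^ (k 3) := by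
      have : m4 k = m3 k ∨ m4 k = k 3 := by simp [m4]; omega
      rcases this with h | h <;> rw [h] <;> tauto
    have hslo : 2 ^ (m3 k) ≤ ((Psi ⟨k, w⟩ 0 : ℕ+) : ℕ) + ((Psi ⟨k, w⟩ 1 : ℕ+) : ℕ)
        + ((Psi ⟨k, w⟩ 2 : ℕ+) : ℕ) := by omega
    have hshi : ((Psi ⟨k, w⟩ 0 : ℕ+) : ℕ) + ((Psi ⟨k, w⟩ 1 : ℕ+) : ℕ)
        + ((Psi ⟨k, w⟩ 2 : ℕ+) : ℕ) ≤ 6 * 2 ^ (m3 k) := by omega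
    have htlo : 2 ^ (m4 k) ≤ ((Psi ⟨k, w⟩ 0 : ℕ+) : ℕ) + ((Psi ⟨k, w⟩ 1 : ℕ+) : ℕ)
        + ((Psi ⟨k, w⟩ 2 : ℕ+) : ℕ) + ((Psi ⟨k, w⟩ 3 : ℕ+) : ℕ) := by omega
    have hthi : ((Psi ⟨k, w⟩ 0 : ℕ+) : ℕ) + ((Psi ⟨k, w⟩ 1 : ℕ+) : ℕ)
        + ((Psi ⟨k, w⟩ 2 : ℕ+) : ℕ) + ((Psi ⟨k, w⟩ 3 : ℕ+) : ℕ) ≤ 8 * 2 ^ (m4 k) := by omega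
    -- real versions
    have hsloR : (2:ℝ) ^ (m3 k) ≤ ((Psi ⟨k, w⟩ 0 : ℕ) : ℝ) + ((Psi ⟨k, w⟩ 1 : ℕ) : ℝ)
        + ((Psi ⟨k, w⟩ 2 : ℕ) : ℝ) := by exact_mod_cast hslo
    have hshiR : ((Psi ⟨k, w⟩ 0 : ℕ) : ℝ) + ((Psi ⟨k, w⟩ 1 : ℕ) : ℝ)
        + ((Psi ⟨k, w⟩ 2 : ℕ) : ℝ) ≤ 6 * (2:ℝ) ^ (m3 k) := by exact_mod_cast hshi
    have htloR : (2:ℝ) ^ (m4 k) ≤ ((Psi ⟨k, w⟩ 0 : ℕ) : ℝ) + ((Psi ⟨k, w⟩ 1 : ℕ) : ℝ)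
        + ((Psi ⟨k, w⟩ 2 : ℕ) : ℝ) + ((Psi ⟨k, w⟩ 3 : ℕ) : ℝ) := by exact_mod_cast htlo
    have hthiR : ((Psi ⟨k, w⟩ 0 : ℕ) : ℝ) + ((Psi ⟨k, w⟩ 1 : ℕ) : ℝ)
        + ((Psi ⟨k, w⟩ 2 : ℕ) : ℝ) + ((Psi ⟨k, w⟩ 3 : ℕ) : ℝ) ≤ 8 * (2:ℝ) ^ (m4 k) := by
      exact_mod_cast hthi
    have htpos : (0:ℝ) < ((Psi ⟨k, w⟩ 0 : ℕ) : ℝ) + ((Psi ⟨k, w⟩ 1 : ℕ) : ℝ)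
        + ((Psi ⟨k, w⟩ 2 : ℕ) : ℝ) + ((Psi ⟨k, w⟩ 3 : ℕ) : ℝ) :=
      lt_of_lt_of_le (hypos _) htloR
    have hFre : F (Psi ⟨k, w⟩)
        = ((Psi ⟨k, w⟩ 0 : ℕ) : ℝ) ^ a₁ * ((Psi ⟨k, w⟩ 1 : ℕ) : ℝ) ^ a₂ *
          ((Psi ⟨k, w⟩ 2 : ℕ) : ℝ) ^ a₃ * ((Psi ⟨k, w⟩ 3 : ℕ) : ℝ) ^ a₄ *
          (((Psi ⟨k, w⟩ 0 : ℕ) : ℝ) + ((Psi ⟨k, w⟩ 1 : ℕ) : ℝ) + ((Psi ⟨k, w⟩ 2 : ℕ) : ℝ)) ^ a₁₂₃ *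
          (((Psi ⟨k, w⟩ 0 : ℕ) : ℝ) + ((Psi ⟨k, w⟩ 1 : ℕ) : ℝ) + ((Psi ⟨k, w⟩ 2 : ℕ) : ℝ)
            + ((Psi ⟨k, w⟩ 3 : ℕ) : ℝ)) ^ (-b) := by
      simp only [hF]
      rw [div_eq_mul_inv, ← Real.rpow_neg htpos.le]
    constructor
    · rw [hFre]
      calc Cmin * P k
          = (min 1 ((2:ℝ) ^ a₁) * ((2:ℝ) ^ (k 0)) ^ a₁) *
            (min 1 ((2:ℝ) ^ a₂) * ((2:ℝ) ^ (k 1)) ^ a₂) *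
            (min 1 ((2:ℝ) ^ a₃) * ((2:ℝ) ^ (k 2)) ^ a₃) *
            (min 1 ((2:ℝ) ^ a₄) * ((2:ℝ) ^ (k 3)) ^ a₄) *
            (min 1 ((6:ℝ) ^ a₁₂₃) * ((2:ℝ) ^ (m3 k)) ^ a₁₂₃) *
            (min 1 ((8:ℝ) ^ (-b)) * ((2:ℝ) ^ (m4 k)) ^ (-b)) := by
            rw [hCm, hP]; ring
        _ ≤ F (Psi ⟨k, w⟩) := by
            rw [hFre]
            gcongr ?_ * ?_ * ?_ * ?_ * ?_ * ?_
            · exact rpow_lower a₁ (hypos _) two_pos (hxlo 0) (hxhi 0)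
            · exact rpow_lower a₂ (hypos _) two_pos (hxlo 1) (hxhi 1)
            · exact rpow_lower a₃ (hypos _) two_pos (hxlo 2) (hxhi 2)
            · exact rpow_lower a₄ (hypos _) two_pos (hxlo 3) (hxhi 3)
            · exact rpow_lower a₁₂₃ (hypos _) (by norm_num) hsloR (by linarith)
            · exact rpow_lower (-b) (hypos _) (by norm_num) htloR (by linarith)
        _ = _ := by rw [hFre]
    · rw [hFre]
      calc ((Psi ⟨k, w⟩ 0 : ℕ) : ℝ) ^ a₁ * ((Psi ⟨k, w⟩ 1 : ℕ) : ℝ) ^ a₂ *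
          ((Psi ⟨k, w⟩ 2 : ℕ) : ℝ) ^ a₃ * ((Psi ⟨k, w⟩ 3 : ℕ) : ℝ) ^ a₄ *
          (((Psi ⟨k, w⟩ 0 : ℕ) : ℝ) + ((Psi ⟨k, w⟩ 1 : ℕ) : ℝ) + ((Psi ⟨k, w⟩ 2 : ℕ) : ℝ)) ^ a₁₂₃ *
          (((Psi ⟨k, w⟩ 0 : ℕ) : ℝ) + ((Psi ⟨k, w⟩ 1 : ℕ) : ℝ) + ((Psi ⟨k, w⟩ 2 : ℕ) : ℝ)
            + ((Psi ⟨k, w⟩ 3 : ℕ) : ℝ)) ^ (-b)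
          ≤ (max 1 ((2:ℝ) ^ a₁) * ((2:ℝ) ^ (k 0)) ^ a₁) *
            (max 1 ((2:ℝ) ^ a₂) * ((2:ℝ) ^ (k 1)) ^ a₂) *
            (max 1 ((2:ℝ) ^ a₃) * ((2:ℝ) ^ (k 2)) ^ a₃) *
            (max 1 ((2:ℝ) ^ a₄) * ((2:ℝ) ^ (k 3)) ^ a₄) *
            (max 1 ((6:ℝ) ^ a₁₂₃) * ((2:ℝ) ^ (m3 k)) ^ a₁₂₃) *
            (max 1 ((8:ℝ) ^ (-b)) * ((2:ℝ) ^ (m4 k)) ^ (-b)) := by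
            gcongr ?_ * ?_ * ?_ * ?_ * ?_ * ?_
            · exact rpow_upper a₁ (hypos _) two_pos (hxlo 0) (hxhi 0)
            · exact rpow_upper a₂ (hypos _) two_pos (hxlo 1) (hxhi 1)
            · exact rpow_upper a₃ (hypos _) two_pos (hxlo 2) (hxhi 2)
            · exact rpow_upper a₄ (hypos _) two_pos (hxlo 3) (hxhi 3)
            · exact rpow_upper a₁₂₃ (hypos _) (by norm_num) hsloR (by linarith)
            · exact rpow_upper (-b) (hypos _) (by norm_num) htloR (by linarith)
        _ = Cmax * P k := by rw [hCM, hP]; ring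

  -- cardinality of fibers
  have hcard : ∀ k : Fin 4 → ℕ,
      ((Fintype.card (∀ j, Fin (2 ^ (k j)))) : ℝ) = (2:ℝ) ^ (∑ j, k j) := by
    intro k
    rw [Fintype.card_pi]
    simp only [Fintype.card_fin]
    rw [Finset.prod_pow_eq_pow_sum]
    push_cast
    rfl
  -- identification of the model function with 2 ^ Lf
  have npow_rpow : ∀ (n : ℕ) (c : ℝ), ((2:ℝ) ^ n) ^ c = (2:ℝ) ^ ((n:ℝ) * c) := by
    intro n c
    rw [← Real.rpow_natCast 2 n, ← Real.rpow_mul (by norm_num)]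
  have hv : ∀ k : Fin 4 → ℕ,
      (2:ℝ) ^ Lf ![a₁, a₂, a₃, a₄] a₁₂₃ b k = (2:ℝ) ^ (∑ j, k j) * P k := by
    intro k
    rw [hP]
    simp only [npow_rpow]
    rw [show ((2:ℝ) ^ (∑ j, k j)) = (2:ℝ) ^ (((∑ j, k j : ℕ)) : ℝ) from
      (Real.rpow_natCast _ _).symm]
    simp only [← Real.rpow_add (by norm_num : (0:ℝ) < 2)]
    congr 1
    rw [Lf, Fin.sum_univ_four, Fin.sum_univ_four]
    simp only [Matrix.cons_val_zero, Matrix.cons_val_one, Matrix.head_cons,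
      Matrix.cons_val_two, Matrix.tail_cons, Matrix.cons_val_three]
    push_cast
    ring
  -- the reduction chain
  rw [← (Equiv.ofBijective Psi Psi_bijective).summable_iff]
  rw [show (F ∘ ⇑(Equiv.ofBijective Psi Psi_bijective))
      = fun p : Σ k : Fin 4 → ℕ, ∀ j, Fin (2 ^ (k j)) => F (Psi p) from rfl]
  rw [summable_sigma_of_nonneg (fun p => hf0 _)]
  rw [and_iff_right (fun k => Summable.of_finite)]
  have h1 : ∀ k : Fin 4 → ℕ,
      Cmin * (2:ℝ) ^ Lf ![a₁, a₂, a₃, a₄] a₁₂₃ b k ≤ ∑' w : ∀ j, Fin (2 ^ (k j)), F (Psi ⟨k, w⟩) := by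
    intro k
    rw [tsum_fintype]
    calc Cmin * (2:ℝ) ^ Lf ![a₁, a₂, a₃, a₄] a₁₂₃ b k
        = ((Fintype.card (∀ j, Fin (2 ^ (k j)))) : ℝ) * (Cmin * P k) := by
          rw [hv, hcard]; ring
      _ = ∑ _w : ∀ j, Fin (2 ^ (k j)), (Cmin * P k) := by
          rw [Finset.sum_const, nsmul_eq_mul, Finset.card_univ]
      _ ≤ ∑ w : ∀ j, Fin (2 ^ (k j)), F (Psi ⟨k, w⟩) :=
          Finset.sum_le_sum (fun w _ => (key k w).1)
  have h2 : ∀ k : Fin 4 → ℕ,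
      (∑' w : ∀ j, Fin (2 ^ (k j)), F (Psi ⟨k, w⟩))
        ≤ Cmax * (2:ℝ) ^ Lf ![a₁, a₂, a₃, a₄] a₁₂₃ b k := by
    intro k
    rw [tsum_fintype]
    calc ∑ w : ∀ j, Fin (2 ^ (k j)), F (Psi ⟨k, w⟩)
        ≤ ∑ _w : ∀ j, Fin (2 ^ (k j)), (Cmax * P k) :=
          Finset.sum_le_sum (fun w _ => (key k w).2)
      _ = ((Fintype.card (∀ j, Fin (2 ^ (k j)))) : ℝ) * (Cmax * P k) := by
          rw [Finset.sum_const, nsmul_eq_mul, Finset.card_univ]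
      _ = Cmax * (2:ℝ) ^ Lf ![a₁, a₂, a₃, a₄] a₁₂₃ b k := by
          rw [hv, hcard]; ring
  rw [summable_iff_of_sandwich hCmin
    (fun k => (Real.rpow_pos_of_pos (by norm_num) _).le) h1 h2]
  exact Core.core ![a₁, a₂, a₃, a₄] a₁₂₃ b
end

section
/- Let a_1, a_2, a_3, a_4, a_5, a_{12}, a_{34}, b be real numbers with a_1 + a_{12} > −1. The series ∑_{i ∈ ℕ₊^5} i_1^{a_1} i_2^{a_2} i_3^{a_3} i_4^{a_4} i_5^{a_5} (i_1 + i_2)^{a_{12}} (i_3 + i_4)^{a_{34}} / (i_1 + i_2 + i_3 + i_4 + i_5)^b converges if and only if for every nonempty subset J ⊆ {1, 2, 3, 4, 5} one has b > |J| + ∑_{j ∈ J} a_j + a_{12}·[J ∩ {1,2} ≠ ∅] + a_{34}·[J ∩ {3,4} ≠ ∅], where [P] equals 1 if the condition P holds and 0 otherwise. -/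
set_option maxHeartbeats 1000000
open Finset ENNReal
namespace ZetaFive


lemma one_le_K_abs {K a : ℝ} (hK : 1 ≤ K) : 1 ≤ K ^ |a| := by
  calc (1:ℝ) = K ^ (0:ℝ) := (Real.rpow_zero K).symm
  _ ≤ K ^ |a| := Real.rpow_le_rpow_of_exponent_le hK (abs_nonneg a)

lemma rpow_le_K {x y K a : ℝ} (hy : 0 < y) (h1 : y ≤ x) (h2 : x ≤ K * y) (hK : 1 ≤ K) :
    x ^ a ≤ K ^ |a| * y ^ a := by
  have hK0 : (0:ℝ) < K := lt_of_lt_of_le one_pos hK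
  rcases le_or_gt 0 a with ha | ha
  · rw [abs_of_nonneg ha]
    calc x ^ a ≤ (K * y) ^ a := Real.rpow_le_rpow (hy.le.trans h1) h2 ha
      _ = K ^ a * y ^ a := Real.mul_rpow hK0.le hy.le
  · calc x ^ a ≤ y ^ a := Real.rpow_le_rpow_of_nonpos hy h1 ha.le
      _ = 1 * y ^ a := (one_mul _).symm
      _ ≤ K ^ |a| * y ^ a :=
        mul_le_mul_of_nonneg_right (one_le_K_abs hK) (Real.rpow_nonneg hy.le a)

lemma rpow_le_K' {x y K a : ℝ} (hy : 0 < y) (h1 : y ≤ x) (h2 : x ≤ K * y) (hK : 1 ≤ K) :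
    y ^ a ≤ K ^ |a| * x ^ a := by
  have hK0 : (0:ℝ) < K := lt_of_lt_of_le one_pos hK
  have hx : (0:ℝ) < x := lt_of_lt_of_le hy h1
  rcases le_or_gt 0 a with ha | ha
  · rw [abs_of_nonneg ha]
    calc y ^ a ≤ x ^ a := Real.rpow_le_rpow hy.le h1 ha
      _ = 1 * x ^ a := (one_mul _).symm
      _ ≤ K ^ a * x ^ a := by
        apply mul_le_mul_of_nonneg_right _ (Real.rpow_nonneg hx.le a)
        calc (1:ℝ) = K ^ (0:ℝ) := (Real.rpow_zero K).symm
          _ ≤ K ^ a := Real.rpow_le_rpow_of_exponent_le hK ha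
  · have key : K ^ a * y ^ a ≤ x ^ a := by
      rw [← Real.mul_rpow hK0.le hy.le]
      exact Real.rpow_le_rpow_of_nonpos hx h2 ha.le
    have habs : |a| = -a := abs_of_neg ha
    have : K ^ (-a) * (K ^ a * y ^ a) ≤ K ^ (-a) * x ^ a :=
      mul_le_mul_of_nonneg_left key (Real.rpow_nonneg hK0.le _)
    calc y ^ a = K ^ (-a) * (K ^ a * y ^ a) := by
          rw [← mul_assoc, ← Real.rpow_add hK0, neg_add_cancel, Real.rpow_zero, one_mul]
      _ ≤ K ^ (-a) * x ^ a := this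
      _ = K ^ |a| * x ^ a := by rw [habs]

lemma summable_iff_ofReal {α : Type*} {f : α → ℝ} (hf : ∀ a, 0 ≤ f a) :
    Summable f ↔ ∑' a, ENNReal.ofReal (f a) ≠ ⊤ := by
  constructor
  · intro h
    rw [← ENNReal.ofReal_tsum_of_nonneg hf h]
    exact ENNReal.ofReal_ne_top
  · intro h
    have := ENNReal.summable_toReal h
    simpa only [ENNReal.toReal_ofReal (hf _)] using this

lemma tsum_pi_geom : ∀ (d : ℕ) (r : Fin d → ℝ≥0∞), (∀ k, r k < 1) →
    ∑' m : Fin d → ℕ, ∏ k, (r k) ^ (m k) ≠ ⊤ := by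
  intro d
  induction d with
  | zero =>
    intro r _
    rw [tsum_fintype]
    simp
  | succ d ih =>
    intro r hr
    rw [← (Fin.consEquiv (fun _ : Fin (d+1) => ℕ)).tsum_eq]
    have heq : ∀ p : ℕ × (Fin d → ℕ),
        (∏ k, (r k) ^ ((Fin.consEquiv (fun _ : Fin (d+1) => ℕ)) p k)) =
          (r 0) ^ p.1 * ∏ k, (r k.succ) ^ (p.2 k) := by
      intro p
      rw [Fin.prod_univ_succ]
      simp [Fin.consEquiv]
    rw [tsum_congr heq, ENNReal.tsum_prod']
    have h1 : ∀ x : ℕ, ∑' g : Fin d → ℕ, (r 0) ^ x * ∏ k, (r k.succ) ^ (g k)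
        = (r 0) ^ x * ∑' g : Fin d → ℕ, ∏ k, (r k.succ) ^ (g k) := fun x =>
      ENNReal.tsum_mul_left
    rw [tsum_congr h1, ENNReal.tsum_mul_right]
    apply ENNReal.mul_ne_top
    · rw [ENNReal.tsum_geometric]
      exact ENNReal.inv_ne_top.mpr (by
        simp only [ne_eq, tsub_eq_zero_iff_le, not_le]
        exact hr 0)
    · exact ih (fun k => r k.succ) (fun k => hr k.succ)



/-- The dyadic parametrization of `ℕ+⁵`. -/
def Φ (s : Σ n : Fin 5 → ℕ, ∀ k, Fin (2 ^ n k)) : Fin 5 → ℕ+ :=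
  fun k => ⟨2 ^ s.1 k + (s.2 k : ℕ), by positivity⟩

lemma dyadic_unique {a b s r : ℕ} (hs : s < 2 ^ a) (hr : r < 2 ^ b)
    (h : 2 ^ a + s = 2 ^ b + r) : a = b := by
  rcases lt_trichotomy a b with hab | hab | hab
  · exfalso
    have h1 : 2 ^ (a + 1) ≤ 2 ^ b := Nat.pow_le_pow_right (by norm_num) hab
    have h2 : 2 ^ (a + 1) = 2 * 2 ^ a := by ring
    omega
  · exact hab
  · exfalso
    have h1 : 2 ^ (b + 1) ≤ 2 ^ a := Nat.pow_le_pow_right (by norm_num) hab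
    have h2 : 2 ^ (b + 1) = 2 * 2 ^ b := by ring
    omega

lemma Φ_bijective : Function.Bijective Φ := by
  constructor
  · rintro ⟨n, t⟩ ⟨n', t'⟩ h
    have hk : ∀ k, 2 ^ n k + (t k : ℕ) = 2 ^ n' k + (t' k : ℕ) := by
      intro k
      simpa [Φ] using congrArg (fun x : ℕ+ => (x : ℕ)) (congrFun h k)
    have hn : n = n' := by
      funext k
      exact dyadic_unique (t k).isLt (t' k).isLt (hk k)
    subst hn
    have ht : t = t' := by
      funext k
      have := hk k
      exact Fin.ext (by omega)
    rw [ht]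
  · intro i
    have hpos : ∀ k, (i k : ℕ) ≠ 0 := fun k => (i k).pos.ne'
    have hle : ∀ k, 2 ^ Nat.log 2 (i k : ℕ) ≤ (i k : ℕ) :=
      fun k => Nat.pow_log_le_self 2 (hpos k)
    have hlt : ∀ k, (i k : ℕ) < 2 ^ (Nat.log 2 (i k : ℕ) + 1) :=
      fun k => Nat.lt_pow_succ_log_self (by norm_num) _
    refine ⟨⟨fun k => Nat.log 2 (i k : ℕ),
      fun k => ⟨(i k : ℕ) - 2 ^ Nat.log 2 (i k : ℕ), ?_⟩⟩, ?_⟩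
    · have h1 := hle k
      have h2 := hlt k
      have h3 : 2 ^ (Nat.log 2 (i k : ℕ) + 1) = 2 * 2 ^ Nat.log 2 (i k : ℕ) := by ring
      show (i k : ℕ) - 2 ^ Nat.log 2 (i k : ℕ) < 2 ^ Nat.log 2 (i k : ℕ)
      omega
    · funext k
      apply Subtype.ext
      have h1 := hle k
      show 2 ^ Nat.log 2 (i k : ℕ) + ((i k : ℕ) - 2 ^ Nat.log 2 (i k : ℕ)) = (i k : ℕ)
      omega

section
variable (a₁ a₂ a₃ a₄ a₅ a₁₂ a₃₄ b : ℝ)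
lemma prod8_le {u0 u1 u2 u3 u4 u5 u6 u7 w0 w1 w2 w3 w4 w5 w6 w7 : ℝ}
    (hu1 : 0 ≤ u1) (hu2 : 0 ≤ u2) (hu3 : 0 ≤ u3) (hu4 : 0 ≤ u4) (hu5 : 0 ≤ u5)
    (hu6 : 0 ≤ u6) (hu7 : 0 ≤ u7)
    (hw0 : 0 ≤ w0) (hw1 : 0 ≤ w1) (hw2 : 0 ≤ w2) (hw3 : 0 ≤ w3) (hw4 : 0 ≤ w4)
    (hw5 : 0 ≤ w5) (hw6 : 0 ≤ w6)
    (h0 : u0 ≤ w0) (h1 : u1 ≤ w1) (h2 : u2 ≤ w2) (h3 : u3 ≤ w3) (h4 : u4 ≤ w4)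
    (h5 : u5 ≤ w5) (h6 : u6 ≤ w6) (h7 : u7 ≤ w7) :
    u0 * u1 * u2 * u3 * u4 * u5 * u6 * u7 ≤ w0 * w1 * w2 * w3 * w4 * w5 * w6 * w7 := by
  have p1 : u0 * u1 ≤ w0 * w1 := mul_le_mul h0 h1 hu1 hw0
  have p2 : u0 * u1 * u2 ≤ w0 * w1 * w2 := mul_le_mul p1 h2 hu2 (mul_nonneg hw0 hw1)
  have p3 : u0 * u1 * u2 * u3 ≤ w0 * w1 * w2 * w3 :=
    mul_le_mul p2 h3 hu3 (mul_nonneg (mul_nonneg hw0 hw1) hw2)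
  have p4 := mul_le_mul p3 h4 hu4 (mul_nonneg (mul_nonneg (mul_nonneg hw0 hw1) hw2) hw3)
  have p5 := mul_le_mul p4 h5 hu5
    (mul_nonneg (mul_nonneg (mul_nonneg (mul_nonneg hw0 hw1) hw2) hw3) hw4)
  have p6 := mul_le_mul p5 h6 hu6
    (mul_nonneg (mul_nonneg (mul_nonneg (mul_nonneg (mul_nonneg hw0 hw1) hw2) hw3) hw4) hw5)
  exact mul_le_mul p6 h7 hu7
    (mul_nonneg (mul_nonneg (mul_nonneg (mul_nonneg (mul_nonneg (mul_nonneg hw0 hw1) hw2)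
      hw3) hw4) hw5) hw6)

noncomputable def E0 (n : Fin 5 → ℕ) : ℝ :=
  (n 0 : ℝ) * a₁ + (n 1 : ℝ) * a₂ + (n 2 : ℝ) * a₃ + (n 3 : ℝ) * a₄ + (n 4 : ℝ) * a₅ +
    ((max (n 0) (n 1) : ℕ) : ℝ) * a₁₂ + ((max (n 2) (n 3) : ℕ) : ℝ) * a₃₄ +
    ((max (max (max (max (n 0) (n 1)) (n 2)) (n 3)) (n 4) : ℕ) : ℝ) * (-b)

noncomputable def CC : ℝ :=
  (16:ℝ) ^ |a₁| * (16:ℝ) ^ |a₂| * (16:ℝ) ^ |a₃| * (16:ℝ) ^ |a₄| * (16:ℝ) ^ |a₅| *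
    (16:ℝ) ^ |a₁₂| * (16:ℝ) ^ |a₃₄| * (16:ℝ) ^ |b|

lemma term_bound {x : Fin 5 → ℝ} {n : Fin 5 → ℕ}
    (hl : ∀ k, (2:ℝ) ^ (n k : ℝ) ≤ x k) (hu : ∀ k, x k ≤ 2 * (2:ℝ) ^ (n k : ℝ)) :
    x 0 ^ a₁ * x 1 ^ a₂ * x 2 ^ a₃ * x 3 ^ a₄ * x 4 ^ a₅ * (x 0 + x 1) ^ a₁₂ *
        (x 2 + x 3) ^ a₃₄ / (x 0 + x 1 + x 2 + x 3 + x 4) ^ b ≤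
      CC a₁ a₂ a₃ a₄ a₅ a₁₂ a₃₄ b * (2:ℝ) ^ E0 a₁ a₂ a₃ a₄ a₅ a₁₂ a₃₄ b n ∧
    (2:ℝ) ^ E0 a₁ a₂ a₃ a₄ a₅ a₁₂ a₃₄ b n ≤
      CC a₁ a₂ a₃ a₄ a₅ a₁₂ a₃₄ b *
        (x 0 ^ a₁ * x 1 ^ a₂ * x 2 ^ a₃ * x 3 ^ a₄ * x 4 ^ a₅ * (x 0 + x 1) ^ a₁₂ *
          (x 2 + x 3) ^ a₃₄ / (x 0 + x 1 + x 2 + x 3 + x 4) ^ b) := by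
  have hyp : ∀ k : Fin 5, (0:ℝ) < (2:ℝ) ^ (n k : ℝ) :=
    fun k => Real.rpow_pos_of_pos two_pos _
  have hxp : ∀ k, 0 < x k := fun k => lt_of_lt_of_le (hyp k) (hl k)
  have h16 : ∀ k, x k ≤ 16 * (2:ℝ) ^ (n k : ℝ) := fun k => (hu k).trans (by nlinarith [hyp k])
  have hmono : ∀ {p q : ℕ}, p ≤ q → (2:ℝ) ^ (p:ℝ) ≤ (2:ℝ) ^ (q:ℝ) := fun {p q} h =>
    Real.rpow_le_rpow_of_exponent_le one_le_two (by exact_mod_cast h)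
  have hl1 : (2:ℝ) ^ ((max (n 0) (n 1) : ℕ) : ℝ) ≤ x 0 + x 1 := by
    rcases le_total (n 0) (n 1) with h | h
    · rw [max_eq_right h]; linarith [hl 1, hxp 0]
    · rw [max_eq_left h]; linarith [hl 0, hxp 1]
  have hu1 : x 0 + x 1 ≤ 16 * (2:ℝ) ^ ((max (n 0) (n 1) : ℕ) : ℝ) := by
    have e0 := hmono (le_max_left (n 0) (n 1))
    have e1 := hmono (le_max_right (n 0) (n 1))
    linarith [hu 0, hu 1, hyp 0, hyp 1]
  have hl2 : (2:ℝ) ^ ((max (n 2) (n 3) : ℕ) : ℝ) ≤ x 2 + x 3 := by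
    rcases le_total (n 2) (n 3) with h | h
    · rw [max_eq_right h]; linarith [hl 3, hxp 2]
    · rw [max_eq_left h]; linarith [hl 2, hxp 3]
  have hu2 : x 2 + x 3 ≤ 16 * (2:ℝ) ^ ((max (n 2) (n 3) : ℕ) : ℝ) := by
    have e0 := hmono (le_max_left (n 2) (n 3))
    have e1 := hmono (le_max_right (n 2) (n 3))
    linarith [hu 2, hu 3, hyp 2, hyp 3]
  set MT : ℕ := max (max (max (max (n 0) (n 1)) (n 2)) (n 3)) (n 4) with hMT
  have hlT : (2:ℝ) ^ ((MT : ℕ) : ℝ) ≤ x 0 + x 1 + x 2 + x 3 + x 4 := by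
    have hM : MT = n 0 ∨ MT = n 1 ∨ MT = n 2 ∨ MT = n 3 ∨ MT = n 4 := by omega
    rcases hM with h | h | h | h | h <;> rw [h] <;>
      [ linarith [hl 0, hxp 1, hxp 2, hxp 3, hxp 4];
        linarith [hl 1, hxp 0, hxp 2, hxp 3, hxp 4];
        linarith [hl 2, hxp 0, hxp 1, hxp 3, hxp 4];
        linarith [hl 3, hxp 0, hxp 1, hxp 2, hxp 4];
        linarith [hl 4, hxp 0, hxp 1, hxp 2, hxp 3] ]
  have huT : x 0 + x 1 + x 2 + x 3 + x 4 ≤ 16 * (2:ℝ) ^ ((MT : ℕ) : ℝ) := by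
    have e0 := hmono (show n 0 ≤ MT by omega)
    have e1 := hmono (show n 1 ≤ MT by omega)
    have e2 := hmono (show n 2 ≤ MT by omega)
    have e3 := hmono (show n 3 ≤ MT by omega)
    have e4 := hmono (show n 4 ≤ MT by omega)
    have hp : (0:ℝ) < (2:ℝ) ^ ((MT : ℕ) : ℝ) := Real.rpow_pos_of_pos two_pos _
    linarith [hu 0, hu 1, hu 2, hu 3, hu 4]
  have hS : (0:ℝ) < x 0 + x 1 + x 2 + x 3 + x 4 := by
    linarith [hxp 0, hxp 1, hxp 2, hxp 3, hxp 4]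
  have hK : (1:ℝ) ≤ 16 := by norm_num
  -- leaf bounds
  have b0 := rpow_le_K (a := a₁) (hyp 0) (hl 0) (h16 0) hK
  have b1 := rpow_le_K (a := a₂) (hyp 1) (hl 1) (h16 1) hK
  have b2 := rpow_le_K (a := a₃) (hyp 2) (hl 2) (h16 2) hK
  have b3 := rpow_le_K (a := a₄) (hyp 3) (hl 3) (h16 3) hK
  have b4 := rpow_le_K (a := a₅) (hyp 4) (hl 4) (h16 4) hK
  have b5 := rpow_le_K (a := a₁₂) (Real.rpow_pos_of_pos two_pos _) hl1 hu1 hK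
  have b6 := rpow_le_K (a := a₃₄) (Real.rpow_pos_of_pos two_pos _) hl2 hu2 hK
  have b7 := rpow_le_K (a := -b) (Real.rpow_pos_of_pos two_pos _) hlT huT hK
  rw [abs_neg] at b7
  have c0 := rpow_le_K' (a := a₁) (hyp 0) (hl 0) (h16 0) hK
  have c1 := rpow_le_K' (a := a₂) (hyp 1) (hl 1) (h16 1) hK
  have c2 := rpow_le_K' (a := a₃) (hyp 2) (hl 2) (h16 2) hK
  have c3 := rpow_le_K' (a := a₄) (hyp 3) (hl 3) (h16 3) hK
  have c4 := rpow_le_K' (a := a₅) (hyp 4) (hl 4) (h16 4) hK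
  have c5 := rpow_le_K' (a := a₁₂) (Real.rpow_pos_of_pos two_pos _) hl1 hu1 hK
  have c6 := rpow_le_K' (a := a₃₄) (Real.rpow_pos_of_pos two_pos _) hl2 hu2 hK
  have c7 := rpow_le_K' (a := -b) (Real.rpow_pos_of_pos two_pos _) hlT huT hK
  rw [abs_neg] at c7
  -- expansion of 2 ^ E0
  have heq : (2:ℝ) ^ E0 a₁ a₂ a₃ a₄ a₅ a₁₂ a₃₄ b n =
      ((2:ℝ) ^ ((n 0 : ℕ):ℝ)) ^ a₁ * ((2:ℝ) ^ ((n 1 : ℕ):ℝ)) ^ a₂ *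
      ((2:ℝ) ^ ((n 2 : ℕ):ℝ)) ^ a₃ * ((2:ℝ) ^ ((n 3 : ℕ):ℝ)) ^ a₄ *
      ((2:ℝ) ^ ((n 4 : ℕ):ℝ)) ^ a₅ * ((2:ℝ) ^ ((max (n 0) (n 1) : ℕ):ℝ)) ^ a₁₂ *
      ((2:ℝ) ^ ((max (n 2) (n 3) : ℕ):ℝ)) ^ a₃₄ * ((2:ℝ) ^ ((MT : ℕ):ℝ)) ^ (-b) := by
    simp only [E0, Real.rpow_add two_pos, Real.rpow_mul (le_of_lt two_pos), hMT]
  have hnn : ∀ (u : ℝ) (c : ℝ), 0 ≤ u → 0 ≤ u ^ c := fun u c hu => Real.rpow_nonneg hu c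
  constructor
  · rw [div_eq_mul_inv, ← Real.rpow_neg hS.le]
    calc x 0 ^ a₁ * x 1 ^ a₂ * x 2 ^ a₃ * x 3 ^ a₄ * x 4 ^ a₅ * (x 0 + x 1) ^ a₁₂ *
          (x 2 + x 3) ^ a₃₄ * (x 0 + x 1 + x 2 + x 3 + x 4) ^ (-b) ≤
        ((16:ℝ) ^ |a₁| * ((2:ℝ) ^ ((n 0 : ℕ):ℝ)) ^ a₁) *
        ((16:ℝ) ^ |a₂| * ((2:ℝ) ^ ((n 1 : ℕ):ℝ)) ^ a₂) *
        ((16:ℝ) ^ |a₃| * ((2:ℝ) ^ ((n 2 : ℕ):ℝ)) ^ a₃) *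
        ((16:ℝ) ^ |a₄| * ((2:ℝ) ^ ((n 3 : ℕ):ℝ)) ^ a₄) *
        ((16:ℝ) ^ |a₅| * ((2:ℝ) ^ ((n 4 : ℕ):ℝ)) ^ a₅) *
        ((16:ℝ) ^ |a₁₂| * ((2:ℝ) ^ ((max (n 0) (n 1) : ℕ):ℝ)) ^ a₁₂) *
        ((16:ℝ) ^ |a₃₄| * ((2:ℝ) ^ ((max (n 2) (n 3) : ℕ):ℝ)) ^ a₃₄) *
        ((16:ℝ) ^ |b| * ((2:ℝ) ^ ((MT : ℕ):ℝ)) ^ (-b)) := by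
          exact prod8_le (hnn _ _ (hxp 1).le) (hnn _ _ (hxp 2).le) (hnn _ _ (hxp 3).le)
            (hnn _ _ (hxp 4).le)
            (hnn _ _ (by linarith [hxp 0, hxp 1] : (0:ℝ) ≤ x 0 + x 1))
            (hnn _ _ (by linarith [hxp 2, hxp 3] : (0:ℝ) ≤ x 2 + x 3))
            (hnn _ _ hS.le)
            (by positivity) (by positivity) (by positivity) (by positivity) (by positivity)
            (by positivity) (by positivity)
            b0 b1 b2 b3 b4 b5 b6 b7
      _ = CC a₁ a₂ a₃ a₄ a₅ a₁₂ a₃₄ b * (2:ℝ) ^ E0 a₁ a₂ a₃ a₄ a₅ a₁₂ a₃₄ b n := by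
          rw [heq]; unfold CC; ring
  · rw [div_eq_mul_inv, ← Real.rpow_neg hS.le, heq]
    calc ((2:ℝ) ^ ((n 0 : ℕ):ℝ)) ^ a₁ * ((2:ℝ) ^ ((n 1 : ℕ):ℝ)) ^ a₂ *
        ((2:ℝ) ^ ((n 2 : ℕ):ℝ)) ^ a₃ * ((2:ℝ) ^ ((n 3 : ℕ):ℝ)) ^ a₄ *
        ((2:ℝ) ^ ((n 4 : ℕ):ℝ)) ^ a₅ * ((2:ℝ) ^ ((max (n 0) (n 1) : ℕ):ℝ)) ^ a₁₂ *
        ((2:ℝ) ^ ((max (n 2) (n 3) : ℕ):ℝ)) ^ a₃₄ * ((2:ℝ) ^ ((MT : ℕ):ℝ)) ^ (-b) ≤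
        ((16:ℝ) ^ |a₁| * x 0 ^ a₁) * ((16:ℝ) ^ |a₂| * x 1 ^ a₂) *
        ((16:ℝ) ^ |a₃| * x 2 ^ a₃) * ((16:ℝ) ^ |a₄| * x 3 ^ a₄) *
        ((16:ℝ) ^ |a₅| * x 4 ^ a₅) * ((16:ℝ) ^ |a₁₂| * (x 0 + x 1) ^ a₁₂) *
        ((16:ℝ) ^ |a₃₄| * (x 2 + x 3) ^ a₃₄) *
        ((16:ℝ) ^ |b| * (x 0 + x 1 + x 2 + x 3 + x 4) ^ (-b)) := by
          exact prod8_le (by positivity) (by positivity) (by positivity) (by positivity)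
            (by positivity) (by positivity) (by positivity)
            (mul_nonneg (by positivity) (hnn _ _ (hxp 0).le))
            (mul_nonneg (by positivity) (hnn _ _ (hxp 1).le))
            (mul_nonneg (by positivity) (hnn _ _ (hxp 2).le))
            (mul_nonneg (by positivity) (hnn _ _ (hxp 3).le))
            (mul_nonneg (by positivity) (hnn _ _ (hxp 4).le))
            (mul_nonneg (by positivity)
              (hnn _ _ (by linarith [hxp 0, hxp 1] : (0:ℝ) ≤ x 0 + x 1)))
            (mul_nonneg (by positivity)
              (hnn _ _ (by linarith [hxp 2, hxp 3] : (0:ℝ) ≤ x 2 + x 3)))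
            c0 c1 c2 c3 c4 c5 c6 c7
      _ = CC a₁ a₂ a₃ a₄ a₅ a₁₂ a₃₄ b *
          (x 0 ^ a₁ * x 1 ^ a₂ * x 2 ^ a₃ * x 3 ^ a₄ * x 4 ^ a₅ * (x 0 + x 1) ^ a₁₂ *
            (x 2 + x 3) ^ a₃₄ * (x 0 + x 1 + x 2 + x 3 + x 4) ^ (-b)) := by
          unfold CC; ring

noncomputable def EE (n : Fin 5 → ℕ) : ℝ :=
  ((n 0 + n 1 + n 2 + n 3 + n 4 : ℕ) : ℝ) + E0 a₁ a₂ a₃ a₄ a₅ a₁₂ a₃₄ b n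

noncomputable def term (i : Fin 5 → ℕ+) : ℝ :=
  ((i 0 : ℕ) : ℝ) ^ a₁ * ((i 1 : ℕ) : ℝ) ^ a₂ * ((i 2 : ℕ) : ℝ) ^ a₃ *
    ((i 3 : ℕ) : ℝ) ^ a₄ * ((i 4 : ℕ) : ℝ) ^ a₅ *
    (((i 0 : ℕ) : ℝ) + ((i 1 : ℕ) : ℝ)) ^ a₁₂ *
    (((i 2 : ℕ) : ℝ) + ((i 3 : ℕ) : ℝ)) ^ a₃₄ /
    (((i 0 : ℕ) : ℝ) + ((i 1 : ℕ) : ℝ) + ((i 2 : ℕ) : ℝ) + ((i 3 : ℕ) : ℝ) +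
      ((i 4 : ℕ) : ℝ)) ^ b

lemma term_nonneg (i : Fin 5 → ℕ+) : 0 ≤ term a₁ a₂ a₃ a₄ a₅ a₁₂ a₃₄ b i := by
  unfold term
  positivity

lemma CC_nonneg : 0 ≤ CC a₁ a₂ a₃ a₄ a₅ a₁₂ a₃₄ b := by
  unfold CC
  positivity

lemma term_bound_Φ (s : Σ n : Fin 5 → ℕ, ∀ k, Fin (2 ^ n k)) :
    term a₁ a₂ a₃ a₄ a₅ a₁₂ a₃₄ b (Φ s) ≤
      CC a₁ a₂ a₃ a₄ a₅ a₁₂ a₃₄ b * (2:ℝ) ^ E0 a₁ a₂ a₃ a₄ a₅ a₁₂ a₃₄ b s.1 ∧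
    (2:ℝ) ^ E0 a₁ a₂ a₃ a₄ a₅ a₁₂ a₃₄ b s.1 ≤
      CC a₁ a₂ a₃ a₄ a₅ a₁₂ a₃₄ b * term a₁ a₂ a₃ a₄ a₅ a₁₂ a₃₄ b (Φ s) := by
  obtain ⟨n, t⟩ := s
  have hl : ∀ k, (2:ℝ) ^ (n k : ℝ) ≤ ((Φ ⟨n, t⟩ k : ℕ) : ℝ) := by
    intro k
    show (2:ℝ) ^ (n k : ℝ) ≤ ((2 ^ n k + (t k : ℕ) : ℕ) : ℝ)
    rw [Real.rpow_natCast]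
    push_cast
    have : (0:ℝ) ≤ ((t k : ℕ) : ℝ) := by positivity
    linarith
  have hu : ∀ k, ((Φ ⟨n, t⟩ k : ℕ) : ℝ) ≤ 2 * (2:ℝ) ^ (n k : ℝ) := by
    intro k
    show ((2 ^ n k + (t k : ℕ) : ℕ) : ℝ) ≤ 2 * (2:ℝ) ^ (n k : ℝ)
    rw [Real.rpow_natCast]
    push_cast
    have : ((t k : ℕ) : ℝ) < (2:ℝ) ^ n k := by exact_mod_cast (t k).isLt
    linarith
  have := term_bound a₁ a₂ a₃ a₄ a₅ a₁₂ a₃₄ b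
    (x := fun k => ((Φ ⟨n, t⟩ k : ℕ) : ℝ)) hl hu
  simpa [term] using this

lemma card_smul (n : Fin 5 → ℕ) (c : ℝ) (hc : 0 ≤ c) :
    ∑' _ : (∀ k, Fin (2 ^ n k)), ENNReal.ofReal c =
      ENNReal.ofReal ((2:ℝ) ^ ((n 0 + n 1 + n 2 + n 3 + n 4 : ℕ) : ℝ) * c) := by
  rw [tsum_fintype, Finset.sum_const, Finset.card_univ, nsmul_eq_mul]
  have hcard : ((Fintype.card (∀ k, Fin (2 ^ n k)) : ℕ) : ℝ) =
      (2:ℝ) ^ ((n 0 + n 1 + n 2 + n 3 + n 4 : ℕ) : ℝ) := by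
    rw [Fintype.card_pi]
    simp only [Fintype.card_fin]
    rw [Fin.prod_univ_five, Real.rpow_natCast]
    push_cast
    rw [pow_add, pow_add, pow_add, pow_add]
  rw [← hcard, ← ENNReal.ofReal_natCast, ← ENNReal.ofReal_mul (by positivity)]

lemma sandwich :
    (∑' i : Fin 5 → ℕ+, ENNReal.ofReal (term a₁ a₂ a₃ a₄ a₅ a₁₂ a₃₄ b i)) ≤
      ENNReal.ofReal (CC a₁ a₂ a₃ a₄ a₅ a₁₂ a₃₄ b) *
        ∑' n : Fin 5 → ℕ, ENNReal.ofReal ((2:ℝ) ^ EE a₁ a₂ a₃ a₄ a₅ a₁₂ a₃₄ b n) ∧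
    (∑' n : Fin 5 → ℕ, ENNReal.ofReal ((2:ℝ) ^ EE a₁ a₂ a₃ a₄ a₅ a₁₂ a₃₄ b n)) ≤
      ENNReal.ofReal (CC a₁ a₂ a₃ a₄ a₅ a₁₂ a₃₄ b) *
        ∑' i : Fin 5 → ℕ+, ENNReal.ofReal (term a₁ a₂ a₃ a₄ a₅ a₁₂ a₃₄ b i) := by
  have hCC := CC_nonneg a₁ a₂ a₃ a₄ a₅ a₁₂ a₃₄ b
  have hsplit : (∑' i : Fin 5 → ℕ+, ENNReal.ofReal (term a₁ a₂ a₃ a₄ a₅ a₁₂ a₃₄ b i)) =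
      ∑' n : Fin 5 → ℕ, ∑' t : (∀ k, Fin (2 ^ n k)),
        ENNReal.ofReal (term a₁ a₂ a₃ a₄ a₅ a₁₂ a₃₄ b (Φ ⟨n, t⟩)) := by
    rw [← (Equiv.ofBijective Φ Φ_bijective).tsum_eq
      (fun i => ENNReal.ofReal (term a₁ a₂ a₃ a₄ a₅ a₁₂ a₃₄ b i))]
    exact ENNReal.tsum_sigma' _
  have hEE : ∀ n : Fin 5 → ℕ,
      (2:ℝ) ^ ((n 0 + n 1 + n 2 + n 3 + n 4 : ℕ) : ℝ) *
        (CC a₁ a₂ a₃ a₄ a₅ a₁₂ a₃₄ b * (2:ℝ) ^ E0 a₁ a₂ a₃ a₄ a₅ a₁₂ a₃₄ b n) =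
      CC a₁ a₂ a₃ a₄ a₅ a₁₂ a₃₄ b * (2:ℝ) ^ EE a₁ a₂ a₃ a₄ a₅ a₁₂ a₃₄ b n := by
    intro n
    rw [EE, Real.rpow_add two_pos]
    ring
  have hEE' : ∀ n : Fin 5 → ℕ,
      (2:ℝ) ^ ((n 0 + n 1 + n 2 + n 3 + n 4 : ℕ) : ℝ) *
        (2:ℝ) ^ E0 a₁ a₂ a₃ a₄ a₅ a₁₂ a₃₄ b n = (2:ℝ) ^ EE a₁ a₂ a₃ a₄ a₅ a₁₂ a₃₄ b n := by
    intro n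
    rw [EE, Real.rpow_add two_pos]
  constructor
  · rw [hsplit]
    calc ∑' n : Fin 5 → ℕ, ∑' t : (∀ k, Fin (2 ^ n k)),
          ENNReal.ofReal (term a₁ a₂ a₃ a₄ a₅ a₁₂ a₃₄ b (Φ ⟨n, t⟩)) ≤
        ∑' n : Fin 5 → ℕ, ∑' _ : (∀ k, Fin (2 ^ n k)),
          ENNReal.ofReal (CC a₁ a₂ a₃ a₄ a₅ a₁₂ a₃₄ b *
            (2:ℝ) ^ E0 a₁ a₂ a₃ a₄ a₅ a₁₂ a₃₄ b n) := by
          refine ENNReal.tsum_le_tsum fun n => ENNReal.tsum_le_tsum fun t => ?_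
          exact ENNReal.ofReal_le_ofReal (term_bound_Φ a₁ a₂ a₃ a₄ a₅ a₁₂ a₃₄ b ⟨n, t⟩).1
      _ = ∑' n : Fin 5 → ℕ,
          ENNReal.ofReal (CC a₁ a₂ a₃ a₄ a₅ a₁₂ a₃₄ b * (2:ℝ) ^ EE a₁ a₂ a₃ a₄ a₅ a₁₂ a₃₄ b n) := by
          refine tsum_congr fun n => ?_
          rw [card_smul _ _ (by positivity), hEE n]
      _ = ENNReal.ofReal (CC a₁ a₂ a₃ a₄ a₅ a₁₂ a₃₄ b) *
          ∑' n : Fin 5 → ℕ, ENNReal.ofReal ((2:ℝ) ^ EE a₁ a₂ a₃ a₄ a₅ a₁₂ a₃₄ b n) := by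
          rw [← ENNReal.tsum_mul_left]
          exact tsum_congr fun n => ENNReal.ofReal_mul hCC
  · rw [hsplit]
    calc ∑' n : Fin 5 → ℕ, ENNReal.ofReal ((2:ℝ) ^ EE a₁ a₂ a₃ a₄ a₅ a₁₂ a₃₄ b n) =
        ∑' n : Fin 5 → ℕ, ∑' _ : (∀ k, Fin (2 ^ n k)),
          ENNReal.ofReal ((2:ℝ) ^ E0 a₁ a₂ a₃ a₄ a₅ a₁₂ a₃₄ b n) := by
          refine tsum_congr fun n => ?_
          rw [card_smul _ _ (by positivity), hEE' n]
      _ ≤ ∑' n : Fin 5 → ℕ, ∑' t : (∀ k, Fin (2 ^ n k)),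
          ENNReal.ofReal (CC a₁ a₂ a₃ a₄ a₅ a₁₂ a₃₄ b *
            term a₁ a₂ a₃ a₄ a₅ a₁₂ a₃₄ b (Φ ⟨n, t⟩)) := by
          refine ENNReal.tsum_le_tsum fun n => ENNReal.tsum_le_tsum fun t => ?_
          exact ENNReal.ofReal_le_ofReal (term_bound_Φ a₁ a₂ a₃ a₄ a₅ a₁₂ a₃₄ b ⟨n, t⟩).2
      _ = ENNReal.ofReal (CC a₁ a₂ a₃ a₄ a₅ a₁₂ a₃₄ b) *
          ∑' n : Fin 5 → ℕ, ∑' t : (∀ k, Fin (2 ^ n k)),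
            ENNReal.ofReal (term a₁ a₂ a₃ a₄ a₅ a₁₂ a₃₄ b (Φ ⟨n, t⟩)) := by
          rw [← ENNReal.tsum_mul_left]
          refine tsum_congr fun n => ?_
          rw [← ENNReal.tsum_mul_left]
          exact tsum_congr fun t => ENNReal.ofReal_mul hCC

noncomputable def cJ (J : Finset (Fin 5)) : ℝ :=
  (∑ j ∈ J, (![a₁, a₂, a₃, a₄, a₅] j + 1)) +
    (if (0 : Fin 5) ∈ J ∨ (1 : Fin 5) ∈ J then a₁₂ else 0) +
    (if (2 : Fin 5) ∈ J ∨ (3 : Fin 5) ∈ J then a₃₄ else 0) - b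

def NN (σ : Equiv.Perm (Fin 5)) (m : Fin 5 → ℕ) : Fin 5 → ℕ :=
  fun j => ∑ k ∈ Finset.Iic (σ⁻¹ j), m k

def JJ (σ : Equiv.Perm (Fin 5)) (k : Fin 5) : Finset (Fin 5) :=
  univ.filter fun j => k ≤ σ⁻¹ j

lemma JJ_nonempty (σ : Equiv.Perm (Fin 5)) (k : Fin 5) : (JJ σ k).Nonempty := by
  refine ⟨σ k, ?_⟩
  simp [JJ]

lemma NN_mono (σ : Equiv.Perm (Fin 5)) (m : Fin 5 → ℕ) {i j : Fin 5} (h : σ⁻¹ i ≤ σ⁻¹ j) :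
    NN σ m i ≤ NN σ m j :=
  Finset.sum_le_sum_of_subset (Finset.Iic_subset_Iic.mpr h)

lemma Iic_sum_eq (m : Fin 5 → ℕ) (p : Fin 5) :
    ((∑ k ∈ Finset.Iic p, m k : ℕ) : ℝ) = ∑ k, if k ≤ p then (m k : ℝ) else 0 := by
  rw [show Finset.Iic p = univ.filter (· ≤ p) by ext x; simp, Finset.sum_filter]
  push_cast
  rfl

lemma hmax (σ : Equiv.Perm (Fin 5)) (m : Fin 5 → ℕ) (i j : Fin 5) :
    ((max (NN σ m i) (NN σ m j) : ℕ) : ℝ) =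
      ∑ k, if k ≤ σ⁻¹ i ∨ k ≤ σ⁻¹ j then (m k : ℝ) else 0 := by
  rcases le_total (σ⁻¹ i) (σ⁻¹ j) with h | h
  · rw [max_eq_right (NN_mono σ m h), show NN σ m j = ∑ k ∈ Finset.Iic (σ⁻¹ j), m k from rfl,
      Iic_sum_eq]
    refine Finset.sum_congr rfl fun k _ => ?_
    refine if_congr ⟨fun hk => Or.inr hk, fun hk => hk.elim (fun h' => h'.trans h) id⟩ rfl rfl
  · rw [max_eq_left (NN_mono σ m h), show NN σ m i = ∑ k ∈ Finset.Iic (σ⁻¹ i), m k from rfl,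
      Iic_sum_eq]
    refine Finset.sum_congr rfl fun k _ => ?_
    refine if_congr ⟨fun hk => Or.inl hk, fun hk => hk.elim id (fun h' => h'.trans h)⟩ rfl rfl

lemma le_four (p : Fin 5) : p ≤ (4 : Fin 5) := by
  have := p.isLt
  rw [Fin.le_def]
  norm_num
  omega

lemma hmaxall (σ : Equiv.Perm (Fin 5)) (m : Fin 5 → ℕ) :
    ((max (max (max (max (NN σ m 0) (NN σ m 1)) (NN σ m 2)) (NN σ m 3)) (NN σ m 4) : ℕ) : ℝ) =
      ∑ k, (m k : ℝ) := by
  have hle : ∀ j, NN σ m j ≤ NN σ m (σ 4) := fun j => by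
    refine NN_mono σ m ?_
    rw [Equiv.Perm.inv_def, Equiv.symm_apply_apply]
    exact le_four _
  have hup : ∀ j : Fin 5,
      NN σ m j ≤ max (max (max (max (NN σ m 0) (NN σ m 1)) (NN σ m 2)) (NN σ m 3)) (NN σ m 4) := by
    intro j
    fin_cases j <;> simp [le_max_iff]
  have hkey : max (max (max (max (NN σ m 0) (NN σ m 1)) (NN σ m 2)) (NN σ m 3)) (NN σ m 4) =
      NN σ m (σ 4) :=
    le_antisymm
      (max_le (max_le (max_le (max_le (hle 0) (hle 1)) (hle 2)) (hle 3)) (hle 4)) (hup (σ 4))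
  rw [hkey, show NN σ m (σ 4) = ∑ k ∈ Finset.Iic (σ⁻¹ (σ 4)), m k from rfl,
    Equiv.Perm.inv_def, Equiv.symm_apply_apply, show Finset.Iic (4 : Fin 5) = univ by decide]
  push_cast
  rfl

lemma hcJ (σ : Equiv.Perm (Fin 5)) (k : Fin 5) :
    cJ a₁ a₂ a₃ a₄ a₅ a₁₂ a₃₄ b (JJ σ k) =
      ((if k ≤ σ⁻¹ 0 then a₁ + 1 else 0) + (if k ≤ σ⁻¹ 1 then a₂ + 1 else 0) +
        (if k ≤ σ⁻¹ 2 then a₃ + 1 else 0) + (if k ≤ σ⁻¹ 3 then a₄ + 1 else 0) +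
        (if k ≤ σ⁻¹ 4 then a₅ + 1 else 0)) +
      (if k ≤ σ⁻¹ 0 ∨ k ≤ σ⁻¹ 1 then a₁₂ else 0) +
      (if k ≤ σ⁻¹ 2 ∨ k ≤ σ⁻¹ 3 then a₃₄ else 0) - b := by
  unfold cJ JJ
  rw [Finset.sum_filter, Fin.sum_univ_five]
  simp [Finset.mem_filter]

lemma lin (σ : Equiv.Perm (Fin 5)) (m : Fin 5 → ℕ) :
    EE a₁ a₂ a₃ a₄ a₅ a₁₂ a₃₄ b (NN σ m) =
      ∑ k, (m k : ℝ) * cJ a₁ a₂ a₃ a₄ a₅ a₁₂ a₃₄ b (JJ σ k) := by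
  have key : ∀ k : Fin 5, (m k : ℝ) * cJ a₁ a₂ a₃ a₄ a₅ a₁₂ a₃₄ b (JJ σ k) =
      ((if k ≤ σ⁻¹ 0 then (m k : ℝ) else 0) + (if k ≤ σ⁻¹ 1 then (m k : ℝ) else 0) +
        (if k ≤ σ⁻¹ 2 then (m k : ℝ) else 0) + (if k ≤ σ⁻¹ 3 then (m k : ℝ) else 0) +
        (if k ≤ σ⁻¹ 4 then (m k : ℝ) else 0)) +
      ((if k ≤ σ⁻¹ 0 then (m k : ℝ) * a₁ else 0) + (if k ≤ σ⁻¹ 1 then (m k : ℝ) * a₂ else 0) +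
        (if k ≤ σ⁻¹ 2 then (m k : ℝ) * a₃ else 0) + (if k ≤ σ⁻¹ 3 then (m k : ℝ) * a₄ else 0) +
        (if k ≤ σ⁻¹ 4 then (m k : ℝ) * a₅ else 0)) +
      (if k ≤ σ⁻¹ 0 ∨ k ≤ σ⁻¹ 1 then (m k : ℝ) * a₁₂ else 0) +
      (if k ≤ σ⁻¹ 2 ∨ k ≤ σ⁻¹ 3 then (m k : ℝ) * a₃₄ else 0) +
      (m k : ℝ) * (-b) := by
    intro k
    rw [hcJ]
    split_ifs <;> ring
  rw [Finset.sum_congr rfl fun k _ => key k]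
  simp only [Finset.sum_add_distrib]
  have hN : ∀ j : Fin 5, ((NN σ m j : ℕ) : ℝ) = ∑ k, if k ≤ σ⁻¹ j then (m k : ℝ) else 0 :=
    fun j => Iic_sum_eq m (σ⁻¹ j)
  have hNmul : ∀ (j : Fin 5) (c : ℝ), ((NN σ m j : ℕ) : ℝ) * c =
      ∑ k, if k ≤ σ⁻¹ j then (m k : ℝ) * c else 0 := by
    intro j c
    rw [hN j, Finset.sum_mul]
    exact Finset.sum_congr rfl fun k _ => by split_ifs <;> ring
  have hmaxmul : ∀ (i j : Fin 5) (c : ℝ), ((max (NN σ m i) (NN σ m j) : ℕ) : ℝ) * c =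
      ∑ k, if k ≤ σ⁻¹ i ∨ k ≤ σ⁻¹ j then (m k : ℝ) * c else 0 := by
    intro i j c
    rw [hmax σ m i j, Finset.sum_mul]
    exact Finset.sum_congr rfl fun k _ => by split_ifs <;> ring
  have hallmul : ∀ c : ℝ,
      ((max (max (max (max (NN σ m 0) (NN σ m 1)) (NN σ m 2)) (NN σ m 3)) (NN σ m 4) : ℕ) : ℝ) * c
        = ∑ k, (m k : ℝ) * c := by
    intro c
    rw [hmaxall σ m, Finset.sum_mul]
  rw [EE, E0, hNmul 0 a₁, hNmul 1 a₂, hNmul 2 a₃, hNmul 3 a₄, hNmul 4 a₅,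
    hmaxmul 0 1 a₁₂, hmaxmul 2 3 a₃₄, hallmul (-b)]
  push_cast
  rw [hN 0, hN 1, hN 2, hN 3, hN 4]
  ring

lemma two_rpow_sum {ι : Type*} (s : Finset ι) (f : ι → ℝ) :
    (2:ℝ) ^ (∑ i ∈ s, f i) = ∏ i ∈ s, (2:ℝ) ^ f i := by
  classical
  induction s using Finset.induction_on with
  | empty => simp
  | insert x s hx ih =>
    rw [Finset.sum_insert hx, Finset.prod_insert hx, Real.rpow_add two_pos, ih]

lemma NN_surjective :
    Function.Surjective (fun p : Equiv.Perm (Fin 5) × (Fin 5 → ℕ) => NN p.1 p.2) := by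
  intro n
  set σ := Tuple.sort n with hσ
  have hg : Monotone (n ∘ σ) := Tuple.monotone_sort n
  set g : Fin 5 → ℕ := n ∘ σ with hgdef
  have h01 : g 0 ≤ g 1 := hg (by decide)
  have h12 : g 1 ≤ g 2 := hg (by decide)
  have h23 : g 2 ≤ g 3 := hg (by decide)
  have h34 : g 3 ≤ g 4 := hg (by decide)
  set m : Fin 5 → ℕ := ![g 0, g 1 - g 0, g 2 - g 1, g 3 - g 2, g 4 - g 3] with hm
  have hIic : ∀ p : Fin 5, ∑ k ∈ Finset.Iic p, m k = g p := by
    intro p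
    have hm0 : m 0 = g 0 := rfl
    have hm1 : m 1 = g 1 - g 0 := rfl
    have hm2 : m 2 = g 2 - g 1 := rfl
    have hm3 : m 3 = g 3 - g 2 := rfl
    have hm4 : m 4 = g 4 - g 3 := rfl
    fin_cases p
    · show ∑ k ∈ Finset.Iic (0 : Fin 5), m k = g 0
      rw [show Finset.Iic (0 : Fin 5) = {0} from by decide, Finset.sum_singleton]
      exact hm0
    · show ∑ k ∈ Finset.Iic (1 : Fin 5), m k = g 1
      rw [show Finset.Iic (1 : Fin 5) = {0, 1} from by decide,
        Finset.sum_insert (by decide), Finset.sum_singleton, hm0, hm1]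
      omega
    · show ∑ k ∈ Finset.Iic (2 : Fin 5), m k = g 2
      rw [show Finset.Iic (2 : Fin 5) = {0, 1, 2} from by decide,
        Finset.sum_insert (by decide), Finset.sum_insert (by decide), Finset.sum_singleton,
        hm0, hm1, hm2]
      omega
    · show ∑ k ∈ Finset.Iic (3 : Fin 5), m k = g 3
      rw [show Finset.Iic (3 : Fin 5) = {0, 1, 2, 3} from by decide,
        Finset.sum_insert (by decide), Finset.sum_insert (by decide),
        Finset.sum_insert (by decide), Finset.sum_singleton, hm0, hm1, hm2, hm3]
      omega
    · show ∑ k ∈ Finset.Iic (4 : Fin 5), m k = g 4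
      rw [show Finset.Iic (4 : Fin 5) = {0, 1, 2, 3, 4} from by decide,
        Finset.sum_insert (by decide), Finset.sum_insert (by decide),
        Finset.sum_insert (by decide), Finset.sum_insert (by decide), Finset.sum_singleton,
        hm0, hm1, hm2, hm3, hm4]
      omega
  refine ⟨⟨σ, m⟩, ?_⟩
  funext j
  show NN σ m j = n j
  rw [NN, hIic (σ⁻¹ j)]
  show n (σ (σ⁻¹ j)) = n j
  rw [Equiv.Perm.inv_def, Equiv.apply_symm_apply]



lemma criterion_fin
    (hcond : ∀ J : Finset (Fin 5), J.Nonempty → cJ a₁ a₂ a₃ a₄ a₅ a₁₂ a₃₄ b J < 0) :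
    ∑' n : Fin 5 → ℕ, ENNReal.ofReal ((2:ℝ) ^ EE a₁ a₂ a₃ a₄ a₅ a₁₂ a₃₄ b n) ≠ ⊤ := by
  have cover := ENNReal.tsum_le_tsum_comp_of_surjective NN_surjective
    (fun n => ENNReal.ofReal ((2:ℝ) ^ EE a₁ a₂ a₃ a₄ a₅ a₁₂ a₃₄ b n))
  refine ne_top_of_le_ne_top ?_ cover
  rw [ENNReal.tsum_prod', tsum_fintype]
  refine (ENNReal.sum_lt_top.mpr fun σ _ => ?_).ne
  have hrw : ∀ m : Fin 5 → ℕ,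
      ENNReal.ofReal ((2:ℝ) ^ EE a₁ a₂ a₃ a₄ a₅ a₁₂ a₃₄ b (NN σ m)) =
        ∏ k, (ENNReal.ofReal ((2:ℝ) ^ cJ a₁ a₂ a₃ a₄ a₅ a₁₂ a₃₄ b (JJ σ k))) ^ (m k) := by
    intro m
    rw [lin a₁ a₂ a₃ a₄ a₅ a₁₂ a₃₄ b σ m, two_rpow_sum]
    rw [ENNReal.ofReal_prod_of_nonneg fun k _ => Real.rpow_nonneg (by norm_num) _]
    refine Finset.prod_congr rfl fun k _ => ?_
    rw [mul_comm, Real.rpow_mul (by norm_num : (0:ℝ) ≤ 2), Real.rpow_natCast,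
      ENNReal.ofReal_pow (Real.rpow_nonneg (by norm_num) _)]
  calc ∑' m : Fin 5 → ℕ,
      ENNReal.ofReal ((2:ℝ) ^ EE a₁ a₂ a₃ a₄ a₅ a₁₂ a₃₄ b (NN σ m)) =
      ∑' m : Fin 5 → ℕ,
        ∏ k, (ENNReal.ofReal ((2:ℝ) ^ cJ a₁ a₂ a₃ a₄ a₅ a₁₂ a₃₄ b (JJ σ k))) ^ (m k) :=
        tsum_congr hrw
    _ < ⊤ := by
        refine lt_top_iff_ne_top.mpr (tsum_pi_geom 5 _ fun k => ?_)
        exact ENNReal.ofReal_lt_one.mpr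
          (Real.rpow_lt_one_of_one_lt_of_neg one_lt_two (hcond _ (JJ_nonempty σ k)))

def psi (J : Finset (Fin 5)) (m : ℕ) : Fin 5 → ℕ := fun j => if j ∈ J then m else 0

lemma EE_psi (J : Finset (Fin 5)) (hJ : J.Nonempty) (m : ℕ) :
    EE a₁ a₂ a₃ a₄ a₅ a₁₂ a₃₄ b (psi J m) = (m : ℝ) * cJ a₁ a₂ a₃ a₄ a₅ a₁₂ a₃₄ b J := by
  have hmem : (0:Fin 5) ∈ J ∨ (1:Fin 5) ∈ J ∨ (2:Fin 5) ∈ J ∨ (3:Fin 5) ∈ J ∨ (4:Fin 5) ∈ J := by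
    obtain ⟨j0, hj0⟩ := hJ
    fin_cases j0 <;> tauto
  have hsum : ∑ j ∈ J, (![a₁, a₂, a₃, a₄, a₅] j + 1) =
      (if (0:Fin 5) ∈ J then a₁ + 1 else 0) + (if (1:Fin 5) ∈ J then a₂ + 1 else 0) +
      (if (2:Fin 5) ∈ J then a₃ + 1 else 0) + (if (3:Fin 5) ∈ J then a₄ + 1 else 0) +
      (if (4:Fin 5) ∈ J then a₅ + 1 else 0) := by
    rw [← Finset.univ_inter J, ← Finset.sum_ite_mem, Fin.sum_univ_five]
    simp
  have h01 : max (psi J m 0) (psi J m 1) =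
      if (0:Fin 5) ∈ J ∨ (1:Fin 5) ∈ J then m else 0 := by
    simp only [psi]
    split_ifs <;> first | omega | tauto
  have h23 : max (psi J m 2) (psi J m 3) =
      if (2:Fin 5) ∈ J ∨ (3:Fin 5) ∈ J then m else 0 := by
    simp only [psi]
    split_ifs <;> first | omega | tauto
  have hall : max (max (max (max (psi J m 0) (psi J m 1)) (psi J m 2)) (psi J m 3)) (psi J m 4)
      = m := by
    simp only [psi]
    rcases hmem with h | h | h | h | h <;> split_ifs <;> first | omega | tauto
  rw [EE, E0, hall, h01, h23, cJ, hsum]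
  show ((psi J m 0 + psi J m 1 + psi J m 2 + psi J m 3 + psi J m 4 : ℕ) : ℝ) + _ = _
  simp only [psi]
  push_cast
  split_ifs <;> push_cast <;> ring

lemma bad_top (J : Finset (Fin 5)) (hJ : J.Nonempty)
    (hc : 0 ≤ cJ a₁ a₂ a₃ a₄ a₅ a₁₂ a₃₄ b J) :
    ∑' n : Fin 5 → ℕ, ENNReal.ofReal ((2:ℝ) ^ EE a₁ a₂ a₃ a₄ a₅ a₁₂ a₃₄ b n) = ⊤ := by
  obtain ⟨j0, hj0⟩ := hJ
  have hinj : Function.Injective (psi J) := by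
    intro m m' h
    have := congrFun h j0
    simpa [psi, hj0] using this
  refine eq_top_iff.mpr ?_
  calc (⊤ : ℝ≥0∞) = ∑' _ : ℕ, (1 : ℝ≥0∞) :=
        (ENNReal.tsum_const_eq_top_of_ne_zero one_ne_zero).symm
    _ ≤ ∑' m : ℕ, ENNReal.ofReal ((2:ℝ) ^ EE a₁ a₂ a₃ a₄ a₅ a₁₂ a₃₄ b (psi J m)) := by
        refine ENNReal.tsum_le_tsum fun m => ?_
        rw [EE_psi a₁ a₂ a₃ a₄ a₅ a₁₂ a₃₄ b J ⟨j0, hj0⟩ m]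
        refine ENNReal.one_le_ofReal.mpr ?_
        calc (1:ℝ) = (2:ℝ) ^ (0:ℝ) := (Real.rpow_zero 2).symm
          _ ≤ (2:ℝ) ^ ((m:ℝ) * cJ a₁ a₂ a₃ a₄ a₅ a₁₂ a₃₄ b J) :=
            Real.rpow_le_rpow_of_exponent_le one_le_two (by positivity)
    _ ≤ _ := tsum_comp_le_tsum_of_injective hinj _

lemma cJ_lt_zero_iff (J : Finset (Fin 5)) :
    cJ a₁ a₂ a₃ a₄ a₅ a₁₂ a₃₄ b J < 0 ↔
      (J.card : ℝ) + ∑ j ∈ J, ![a₁, a₂, a₃, a₄, a₅] j +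
        (if (0 : Fin 5) ∈ J ∨ (1 : Fin 5) ∈ J then a₁₂ else 0) +
        (if (2 : Fin 5) ∈ J ∨ (3 : Fin 5) ∈ J then a₃₄ else 0) < b := by
  have hsum : ∑ j ∈ J, (![a₁, a₂, a₃, a₄, a₅] j + 1) =
      (∑ j ∈ J, ![a₁, a₂, a₃, a₄, a₅] j) + (J.card : ℝ) := by
    rw [Finset.sum_add_distrib, Finset.sum_const, nsmul_eq_mul, mul_one]
  rw [cJ, hsum]
  constructor <;> intro h <;> linarith

lemma main_iff :
    Summable (term a₁ a₂ a₃ a₄ a₅ a₁₂ a₃₄ b) ↔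
      ∀ J : Finset (Fin 5), J.Nonempty →
        (J.card : ℝ) + ∑ j ∈ J, ![a₁, a₂, a₃, a₄, a₅] j +
          (if (0 : Fin 5) ∈ J ∨ (1 : Fin 5) ∈ J then a₁₂ else 0) +
          (if (2 : Fin 5) ∈ J ∨ (3 : Fin 5) ∈ J then a₃₄ else 0) < b := by
  rw [summable_iff_ofReal (term_nonneg a₁ a₂ a₃ a₄ a₅ a₁₂ a₃₄ b)]
  have hsand := sandwich a₁ a₂ a₃ a₄ a₅ a₁₂ a₃₄ b
  have step1 : (∑' i : Fin 5 → ℕ+, ENNReal.ofReal (term a₁ a₂ a₃ a₄ a₅ a₁₂ a₃₄ b i)) ≠ ⊤ ↔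
      (∑' n : Fin 5 → ℕ, ENNReal.ofReal ((2:ℝ) ^ EE a₁ a₂ a₃ a₄ a₅ a₁₂ a₃₄ b n)) ≠ ⊤ := by
    constructor
    · intro h
      exact ne_top_of_le_ne_top (ENNReal.mul_ne_top ENNReal.ofReal_ne_top h) hsand.2
    · intro h
      exact ne_top_of_le_ne_top (ENNReal.mul_ne_top ENNReal.ofReal_ne_top h) hsand.1
  rw [step1]
  constructor
  · intro h J hJ
    rw [← cJ_lt_zero_iff]
    by_contra hc
    exact h (bad_top a₁ a₂ a₃ a₄ a₅ a₁₂ a₃₄ b J hJ (not_lt.mp hc))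
  · intro h
    exact criterion_fin a₁ a₂ a₃ a₄ a₅ a₁₂ a₃₄ b fun J hJ =>
      (cJ_lt_zero_iff a₁ a₂ a₃ a₄ a₅ a₁₂ a₃₄ b J).mpr (h J hJ)

end
end ZetaFive

/-- Convergence criterion for
`∑_{i ∈ ℕ₊⁵} i₁^{a₁} i₂^{a₂} i₃^{a₃} i₄^{a₄} i₅^{a₅} (i₁+i₂)^{a₁₂} (i₃+i₄)^{a₃₄}
/ (i₁+i₂+i₃+i₄+i₅)^b`, assuming `a₁ + a₁₂ > -1`. -/
theorem zeta_series_five_vars_two_pairs_iff (a₁ a₂ a₃ a₄ a₅ a₁₂ a₃₄ b : ℝ)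
    (h : -1 < a₁ + a₁₂) :
    Summable (fun i : Fin 5 → ℕ+ =>
        ((i 0 : ℕ) : ℝ) ^ a₁ * ((i 1 : ℕ) : ℝ) ^ a₂ * ((i 2 : ℕ) : ℝ) ^ a₃ *
          ((i 3 : ℕ) : ℝ) ^ a₄ * ((i 4 : ℕ) : ℝ) ^ a₅ *
          (((i 0 : ℕ) : ℝ) + ((i 1 : ℕ) : ℝ)) ^ a₁₂ *
          (((i 2 : ℕ) : ℝ) + ((i 3 : ℕ) : ℝ)) ^ a₃₄ /
          (((i 0 : ℕ) : ℝ) + ((i 1 : ℕ) : ℝ) + ((i 2 : ℕ) : ℝ) + ((i 3 : ℕ) : ℝ) +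
            ((i 4 : ℕ) : ℝ)) ^ b) ↔
      ∀ J : Finset (Fin 5), J.Nonempty →
        (J.card : ℝ) + ∑ j ∈ J, ![a₁, a₂, a₃, a₄, a₅] j +
          (if (0 : Fin 5) ∈ J ∨ (1 : Fin 5) ∈ J then a₁₂ else 0) +
          (if (2 : Fin 5) ∈ J ∨ (3 : Fin 5) ∈ J then a₃₄ else 0) < b := by
  exact ZetaFive.main_iff a₁ a₂ a₃ a₄ a₅ a₁₂ a₃₄ b
end
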